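/- arXiv:2312.07023 — 11 statements merged into one kernel-verified Lean document; each statement's English description precedes it below -/
import Mathlib

section
/- Let (x_k) be generated by the inexact PPA iteration applied to the λ-cocoercive operator F, and suppose F(x_*) = 0. Then the sequence (x_k) is bounded and ∑_{k=0}^{∞} ‖x_{k+1} − x_k‖² < ∞. -/
open Filter Topology
open scoped InnerProductSpace

/-- For the inexact PPA iteration applied to a λ-cocoercive operator `F`
with `F x_* = 0`, the sequence `(x_k)` is bounded and `∑ ‖x_{k+1} − x_k‖² < ∞`. -/
theorem ppa_bounded_and_summable
    {H : Type*} [NormedAddCommGroup H] [InnerProductSpace ℝ H] [CompleteSpace H]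
    (lam : ℝ) (hlam : 0 < lam) (F : H → H)
    (hF : ∀ x y : H, lam * ‖F x - F y‖ ^ 2 ≤ ⟪F x - F y, x - y⟫_ℝ)
    (ε : ℝ) (hε : 0 < ε) (a : ℕ → ℝ) (ha : ∀ k, ε ≤ a (k + 1))
    (δ : ℕ → ℝ) (hδ0 : ∀ k, 0 ≤ δ k) (hδ : Summable δ)
    (g : ℕ → H) (hg : ∀ k, ‖g k‖ ≤ δ k)
    (x : ℕ → H)
    (hx : ∀ k, (0 : H) = a (k + 1) • F (x (k + 1)) + x (k + 1) - x k + g k)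
    (xs : H) (hxs : F xs = 0) :
    (∃ M : ℝ, ∀ k, ‖x k‖ ≤ M) ∧ Summable (fun k => ‖x (k + 1) - x k‖ ^ 2) := by
  set u : ℕ → ℝ := fun k => ‖x k - xs‖ with hu
  set S : ℝ := ∑' n, δ n with hSdef
  have hS0 : 0 ≤ S := tsum_nonneg hδ0
  have hδS : ∀ k, δ k ≤ S := fun k => Summable.le_tsum hδ k (fun j _ => hδ0 j)
  -- key inequality
  have key : ∀ k, ‖x (k+1) - xs‖^2 + ‖a (k+1) • F (x (k+1))‖^2
      ≤ (‖x k - xs‖ + δ k)^2 := by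
    intro k
    set B := a (k+1) • F (x (k+1)) with hB
    have hrel : x (k+1) - xs = (x k - g k - xs) - B := by
      have e : (x (k+1) - xs) - ((x k - g k - xs) - B)
          = B + x (k+1) - x k + g k := by rw [hB]; abel
      exact sub_eq_zero.mp (e.trans (hx k).symm)
    have hinner : lam * ‖F (x (k+1))‖^2 ≤ ⟪F (x (k+1)), x (k+1) - xs⟫_ℝ := by
      have h := hF (x (k+1)) xs
      simpa [hxs] using h
    have ha' : (0:ℝ) < a (k+1) := lt_of_lt_of_le hε (ha k)
    have hFnn : (0:ℝ) ≤ ⟪F (x (k+1)), x (k+1) - xs⟫_ℝ :=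
      le_trans (by positivity) hinner
    have hABin : (0:ℝ) ≤ ⟪x (k+1) - xs, B⟫_ℝ := by
      rw [hB, real_inner_smul_right, real_inner_comm]
      exact mul_nonneg ha'.le hFnn
    have hnorm : ‖x (k+1) - xs‖^2
        = ‖x k - g k - xs‖^2 - 2*⟪x k - g k - xs, B⟫_ℝ + ‖B‖^2 := by
      rw [hrel]; exact norm_sub_sq_real _ _
    have hA : x k - g k - xs = (x (k+1) - xs) + B := by rw [hrel]; abel
    have hAB : ⟪x k - g k - xs, B⟫_ℝ = ⟪x (k+1) - xs, B⟫_ℝ + ‖B‖^2 := by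
      rw [hA, inner_add_left, real_inner_self_eq_norm_sq]
    have h1 : ‖x (k+1) - xs‖^2 + ‖B‖^2 ≤ ‖x k - g k - xs‖^2 := by
      rw [hnorm, hAB]; linarith
    have h2 : ‖x k - g k - xs‖ ≤ ‖x k - xs‖ + δ k := by
      have e : x k - g k - xs = (x k - xs) - g k := by abel
      rw [e]
      exact le_trans (norm_sub_le _ _) (by linarith [hg k])
    have h3 : ‖x k - g k - xs‖^2 ≤ (‖x k - xs‖ + δ k)^2 :=
      pow_le_pow_left₀ (norm_nonneg _) h2 2
    linarith
  -- quasi-Fejér monotonicity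
  have hmono : ∀ k, u (k+1) ≤ u k + δ k := by
    intro k
    have hk := key k
    have h1 : u (k+1) ^ 2 ≤ (u k + δ k)^2 := by
      have := sq_nonneg ‖a (k+1) • F (x (k+1))‖
      simp only [hu] at *
      nlinarith
    nlinarith [norm_nonneg (x (k+1) - xs), norm_nonneg (x k - xs), hδ0 k]
  have hbound : ∀ k, u k ≤ u 0 + S := by
    intro k
    have hps : ∀ n, u n ≤ u 0 + ∑ j ∈ Finset.range n, δ j := by
      intro n
      induction n with
      | zero => simp
      | succ m ih =>
        have := hmono m
        rw [Finset.sum_range_succ]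
        linarith
    have h2 : ∑ j ∈ Finset.range k, δ j ≤ S :=
      Summable.sum_le_tsum _ (fun j _ => hδ0 j) hδ
    linarith [hps k]
  set M : ℝ := u 0 + S with hMdef
  have hM0 : 0 ≤ M := add_nonneg (norm_nonneg _) hS0
  constructor
  · refine ⟨M + ‖xs‖, fun k => ?_⟩
    have h1 : ‖x k‖ ≤ ‖x k - xs‖ + ‖xs‖ := by
      have := norm_add_le (x k - xs) xs
      simpa using this
    have := hbound k
    simp only [hu] at this
    linarith
  · have hsumc : Summable (fun k => ‖a (k+1) • F (x (k+1))‖^2) := by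
      apply summable_of_sum_range_le (fun k => sq_nonneg _)
      intro n
      have hterm : ∀ k, ‖a (k+1) • F (x (k+1))‖^2
          ≤ u k^2 - u (k+1)^2 + (2*M + S) * δ k := by
        intro k
        have hk := key k
        have hδk := hδS k
        have huk := hbound k
        have hun : 0 ≤ u k := norm_nonneg _
        simp only [hu] at *
        nlinarith [hδ0 k]
      calc ∑ k ∈ Finset.range n, ‖a (k+1) • F (x (k+1))‖^2
          ≤ ∑ k ∈ Finset.range n, (u k^2 - u (k+1)^2 + (2*M+S)*δ k) :=
            Finset.sum_le_sum (fun k _ => hterm k)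
        _ = (u 0^2 - u n^2) + (2*M+S) * ∑ k ∈ Finset.range n, δ k := by
            rw [Finset.sum_add_distrib, Finset.sum_range_sub' (fun k => u k^2),
              ← Finset.mul_sum]
        _ ≤ u 0^2 + (2*M+S)*S := by
            have h2 : ∑ k ∈ Finset.range n, δ k ≤ S :=
              Summable.sum_le_tsum _ (fun j _ => hδ0 j) hδ
            have h3 : (0:ℝ) ≤ ∑ k ∈ Finset.range n, δ k :=
              Finset.sum_nonneg (fun j _ => hδ0 j)
            nlinarith [sq_nonneg (u n)]
    have hsumδ2 : Summable (fun k => δ k ^ 2) := by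
      apply Summable.of_nonneg_of_le (fun k => sq_nonneg _) (fun k => ?_)
        (hδ.mul_left S)
      have := hδS k
      have := hδ0 k
      nlinarith
    apply Summable.of_nonneg_of_le (fun k => sq_nonneg _) ?_
      ((hsumc.mul_left 2).add (hsumδ2.mul_left 2))
    intro k
    set B := a (k+1) • F (x (k+1)) with hB
    have hrel : x (k+1) - x k = -B - g k := by
      have e : (x (k+1) - x k) - (-B - g k) = B + x (k+1) - x k + g k := by
        rw [hB]; abel
      exact sub_eq_zero.mp (e.trans (hx k).symm)
    have h1 : ‖x (k+1) - x k‖ ≤ ‖B‖ + δ k := by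
      rw [hrel]
      calc ‖-B - g k‖ ≤ ‖-B‖ + ‖g k‖ := norm_sub_le _ _
        _ = ‖B‖ + ‖g k‖ := by rw [norm_neg]
        _ ≤ ‖B‖ + δ k := by linarith [hg k]
    have h0 : 0 ≤ ‖x (k+1) - x k‖ := norm_nonneg _
    nlinarith [sq_nonneg (‖B‖ - δ k), norm_nonneg B, hδ0 k]
end

section
/- Let (x_k) be generated by the inexact PPA iteration applied to the λ-cocoercive operator F, suppose F(x_*) = 0, and define the ergodic averages x̃_{k+1} := (∑_{i=0}^{k} a_{i+1})^{-1} ∑_{i=0}^{k} a_{i+1} x_{i+1}. Then there exists a constant C > 0 such that Gap(x̃_{k+1}) ≤ C / ∑_{i=0}^{k} a_{i+1} for all k ≥ 0. -/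
open Filter Topology
open scoped InnerProductSpace

/-- For the inexact PPA iteration applied to a λ-cocoercive operator `F`
with `F x_* = 0`, the ergodic averages satisfy `Gap(x̃_{k+1}) ≤ C / ∑_{i=0}^k a_{i+1}`. -/
theorem ppa_ergodic_gap_rate
    {H : Type*} [NormedAddCommGroup H] [InnerProductSpace ℝ H] [CompleteSpace H]
    (lam : ℝ) (hlam : 0 < lam) (F : H → H)
    (hF : ∀ x y : H, lam * ‖F x - F y‖ ^ 2 ≤ ⟪F x - F y, x - y⟫_ℝ)
    (x₀ : H) (D : ℝ) (hD : 0 < D)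
    (Gap : H → ℝ)
    (hGap : ∀ z : H, Gap z = ⨆ y : Metric.closedBall x₀ D, ⟪z - (y : H), F (y : H)⟫_ℝ)
    (ε : ℝ) (hε : 0 < ε) (a : ℕ → ℝ) (ha : ∀ k, ε ≤ a (k + 1))
    (δ : ℕ → ℝ) (hδ0 : ∀ k, 0 ≤ δ k) (hδ : Summable δ)
    (g : ℕ → H) (hg : ∀ k, ‖g k‖ ≤ δ k)
    (x : ℕ → H)
    (hx : ∀ k, (0 : H) = a (k + 1) • F (x (k + 1)) + x (k + 1) - x k + g k)
    (xs : H) (hxs : F xs = 0)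
    (xt : ℕ → H)
    (hxt : ∀ k, xt k =
      (∑ i ∈ Finset.range (k + 1), a (i + 1))⁻¹ •
        ∑ i ∈ Finset.range (k + 1), a (i + 1) • x (i + 1)) :
    ∃ C : ℝ, 0 < C ∧ ∀ k, Gap (xt k) ≤ C / ∑ i ∈ Finset.range (k + 1), a (i + 1) := by
  classical
  set Δ : ℝ := ∑' i, δ i with hΔdef
  have hΔ0 : 0 ≤ Δ := tsum_nonneg hδ0
  have hpart : ∀ n : ℕ, ∑ i ∈ Finset.range n, δ i ≤ Δ := fun n =>
    Summable.sum_le_tsum (Finset.range n) (fun i _ => hδ0 i) hδ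
  -- rearranged iteration
  have heq : ∀ k, a (k+1) • F (x (k+1)) = x k - x (k+1) - g k := by
    intro k
    have h2 : a (k+1) • F (x (k+1)) + x (k+1) - x k + g k = 0 := (hx k).symm
    rw [← sub_eq_zero, ← h2]; abel
  -- step estimate
  have hstep : ∀ k, ‖x (k+1) - xs‖ ≤ ‖x k - xs‖ + δ k := by
    intro k
    set u : H := x (k+1) - xs with hu
    have hmon : 0 ≤ ⟪u, F (x (k+1))⟫_ℝ := by
      have h1 := hF (x (k+1)) xs
      rw [hxs, sub_zero] at h1
      have h2 : 0 ≤ ⟪F (x (k+1)), x (k+1) - xs⟫_ℝ := le_trans (by positivity) h1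
      rwa [real_inner_comm] at h2
    have hdecomp : u = (x k - g k - xs) - a (k+1) • F (x (k+1)) := by
      rw [hu, heq k]; abel
    have hinner : ⟪u, u⟫_ℝ = ⟪u, x k - g k - xs⟫_ℝ - a (k+1) * ⟪u, F (x (k+1))⟫_ℝ := by
      rw [← real_inner_smul_right, ← inner_sub_right, ← hdecomp]
    have ha0 : (0:ℝ) < a (k+1) := lt_of_lt_of_le hε (ha k)
    have h3 : ‖u‖^2 ≤ ‖u‖ * (‖x k - xs‖ + δ k) := by
      have h4 : ⟪u, x k - g k - xs⟫_ℝ ≤ ‖u‖ * ‖x k - g k - xs‖ := real_inner_le_norm _ _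
      have h5 : ‖x k - g k - xs‖ ≤ ‖x k - xs‖ + δ k := by
        have : x k - g k - xs = (x k - xs) - g k := by abel
        rw [this]
        exact le_trans (norm_sub_le _ _) (by linarith [hg k])
      have h6 : ‖u‖^2 ≤ ⟪u, x k - g k - xs⟫_ℝ := by
        rw [← real_inner_self_eq_norm_sq]
        nlinarith [mul_nonneg ha0.le hmon]
      calc ‖u‖^2 ≤ ‖u‖ * ‖x k - g k - xs‖ := le_trans h6 h4
        _ ≤ ‖u‖ * (‖x k - xs‖ + δ k) := by
            exact mul_le_mul_of_nonneg_left h5 (norm_nonneg u)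
    nlinarith [norm_nonneg u, norm_nonneg (x k - xs), hδ0 k]
  -- uniform bound on the trajectory
  set R : ℝ := ‖x 0 - xs‖ + Δ with hRdef
  have hR : ∀ k, ‖x k - xs‖ ≤ R := by
    have h1 : ∀ k, ‖x k - xs‖ ≤ ‖x 0 - xs‖ + ∑ i ∈ Finset.range k, δ i := by
      intro k
      induction k with
      | zero => simp
      | succ n ih =>
          calc ‖x (n+1) - xs‖ ≤ ‖x n - xs‖ + δ n := hstep n
            _ ≤ ‖x 0 - xs‖ + ∑ i ∈ Finset.range n, δ i + δ n := by linarith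
            _ = ‖x 0 - xs‖ + ∑ i ∈ Finset.range (n+1), δ i := by
                rw [Finset.sum_range_succ]; ring
    intro k
    exact le_trans (h1 k) (by linarith [hpart k])
  have hR0 : 0 ≤ R := le_trans (norm_nonneg _) (by linarith)
  set M : ℝ := R + ‖xs - x₀‖ + D with hMdef
  have hM0 : 0 ≤ M := by positivity
  set C₀ : ℝ := (‖x 0 - x₀‖ + D)^2/2 + Δ * M with hC0def
  have hC00 : 0 ≤ C₀ := by positivity
  clear_value Δ R M C₀
  -- key summed estimate
  have hkey : ∀ (y : H), ‖y - x₀‖ ≤ D → ∀ k,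
      ∑ i ∈ Finset.range (k+1), a (i+1) * ⟪x (i+1) - y, F y⟫_ℝ ≤ C₀ := by
    intro y hy k
    have hterm : ∀ i, a (i+1) * ⟪x (i+1) - y, F y⟫_ℝ ≤
        (‖x i - y‖^2/2 - ‖x (i+1) - y‖^2/2) + δ i * M := by
      intro i
      have hmon : ⟪x (i+1) - y, F y⟫_ℝ ≤ ⟪x (i+1) - y, F (x (i+1))⟫_ℝ := by
        have h1 := hF (x (i+1)) y
        have h2 : 0 ≤ ⟪F (x (i+1)) - F y, x (i+1) - y⟫_ℝ := le_trans (by positivity) h1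
        rw [real_inner_comm, inner_sub_right] at h2
        linarith
      have ha0 : (0:ℝ) ≤ a (i+1) := le_trans hε.le (ha i)
      have h3 : a (i+1) * ⟪x (i+1) - y, F y⟫_ℝ ≤ a (i+1) * ⟪x (i+1) - y, F (x (i+1))⟫_ℝ :=
        mul_le_mul_of_nonneg_left hmon ha0
      have h4 : a (i+1) * ⟪x (i+1) - y, F (x (i+1))⟫_ℝ = ⟪x (i+1) - y, x i - x (i+1)⟫_ℝ - ⟪x (i+1) - y, g i⟫_ℝ := by
        rw [← real_inner_smul_right, heq i, inner_sub_right]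
      have e1 : x i - x (i+1) = (x i - y) - (x (i+1) - y) := by abel
      have h5 : ⟪x (i+1) - y, x i - x (i+1)⟫_ℝ
          = (‖x i - y‖^2 - ‖x (i+1) - y‖^2 - ‖x i - x (i+1)‖^2)/2 := by
        have e2 : ‖x i - y - (x (i+1) - y)‖^2
            = ‖x i - y‖^2 - 2*⟪x i - y, x (i+1) - y⟫_ℝ + ‖x (i+1) - y‖^2 :=
          norm_sub_sq_real _ _
        have e3 : ⟪x (i+1) - y, x i - y⟫_ℝ = ⟪x i - y, x (i+1) - y⟫_ℝ := real_inner_comm _ _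
        have e4 : ⟪x (i+1) - y, x (i+1) - y⟫_ℝ = ‖x (i+1) - y‖^2 := real_inner_self_eq_norm_sq _
        rw [e1, inner_sub_right, e3, e4]
        linarith
      have hvM : ‖x (i+1) - y‖ ≤ M := by
        have ev : x (i+1) - y = (x (i+1) - xs) + (xs - x₀) + (x₀ - y) := by abel
        calc ‖x (i+1) - y‖ ≤ ‖x (i+1) - xs‖ + ‖xs - x₀‖ + ‖x₀ - y‖ := by
              rw [ev]; exact le_trans (norm_add_le _ _)
                (by linarith [norm_add_le (x (i+1) - xs) (xs - x₀)])
          _ ≤ R + ‖xs - x₀‖ + D := by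
              have := hR (i+1)
              rw [norm_sub_rev x₀ y]
              linarith
          _ = M := hMdef.symm
      have h6 : -⟪x (i+1) - y, g i⟫_ℝ ≤ δ i * M := by
        have h7 := abs_real_inner_le_norm (x (i+1) - y) (g i)
        have h8 : ‖x (i+1) - y‖ * ‖g i‖ ≤ M * δ i :=
          mul_le_mul hvM (hg i) (norm_nonneg _) hM0
        have h9 := abs_le.mp h7
        linarith [h9.1]
      nlinarith [sq_nonneg ‖x i - x (i+1)‖]
    calc ∑ i ∈ Finset.range (k+1), a (i+1) * ⟪x (i+1) - y, F y⟫_ℝ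
        ≤ ∑ i ∈ Finset.range (k+1),
            ((‖x i - y‖^2/2 - ‖x (i+1) - y‖^2/2) + δ i * M) :=
          Finset.sum_le_sum (fun i _ => hterm i)
      _ = (‖x 0 - y‖^2/2 - ‖x (k+1) - y‖^2/2)
            + (∑ i ∈ Finset.range (k+1), δ i) * M := by
          rw [Finset.sum_add_distrib, Finset.sum_range_sub' (fun i => ‖x i - y‖^2/2),
            ← Finset.sum_mul]
      _ ≤ C₀ := by
          have h7 : ‖x 0 - y‖ ≤ ‖x 0 - x₀‖ + D := by
            have e : x 0 - y = (x 0 - x₀) + (x₀ - y) := by abel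
            rw [e]
            refine le_trans (norm_add_le _ _) ?_
            rw [norm_sub_rev x₀ y]
            linarith
          have h8 : ‖x 0 - y‖^2 ≤ (‖x 0 - x₀‖ + D)^2 :=
            pow_le_pow_left₀ (norm_nonneg _) h7 2
          have h9 : (∑ i ∈ Finset.range (k+1), δ i) * M ≤ Δ * M :=
            mul_le_mul_of_nonneg_right (hpart _) hM0
          have h10 : 0 ≤ ‖x (k+1) - y‖^2 := sq_nonneg _
          rw [hC0def]
          linarith
  refine ⟨C₀ + 1, by linarith, fun k => ?_⟩
  set S : ℝ := ∑ i ∈ Finset.range (k+1), a (i+1) with hSdef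
  have hS : 0 < S :=
    Finset.sum_pos (fun i _ => lt_of_lt_of_le hε (ha i))
      (Finset.nonempty_range_iff.mpr (Nat.succ_ne_zero k))
  rw [hGap]
  refine Real.iSup_le (fun y => ?_) (by positivity)
  have hy : ‖(y : H) - x₀‖ ≤ D := by
    have := y.2
    rw [Metric.mem_closedBall, dist_eq_norm] at this
    exact this
  have hrepr : xt k - (y : H)
      = S⁻¹ • ∑ i ∈ Finset.range (k+1), a (i+1) • (x (i+1) - (y : H)) := by
    have e : ∑ i ∈ Finset.range (k+1), a (i+1) • (x (i+1) - (y : H))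
        = (∑ i ∈ Finset.range (k+1), a (i+1) • x (i+1)) - S • (y : H) := by
      simp [smul_sub, Finset.sum_sub_distrib, Finset.sum_smul, hSdef]
    rw [e, smul_sub, smul_smul, inv_mul_cancel₀ hS.ne', one_smul, hxt k]
  have hinner : ⟪xt k - (y : H), F (y : H)⟫_ℝ
      = S⁻¹ * ∑ i ∈ Finset.range (k+1), a (i+1) * ⟪x (i+1) - (y : H), F (y : H)⟫_ℝ := by
    rw [hrepr, real_inner_smul_left, sum_inner]
    congr 1
    exact Finset.sum_congr rfl (fun i _ => real_inner_smul_left _ _ _)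
  rw [hinner]
  have hb := hkey (y : H) hy k
  calc S⁻¹ * ∑ i ∈ Finset.range (k+1), a (i+1) * ⟪x (i+1) - (y : H), F (y : H)⟫_ℝ
      ≤ S⁻¹ * C₀ := mul_le_mul_of_nonneg_left hb (inv_nonneg.mpr hS.le)
    _ ≤ (C₀ + 1) / S := by
        rw [div_eq_mul_inv]
        have : S⁻¹ * C₀ = C₀ * S⁻¹ := by ring
        rw [this]
        exact mul_le_mul_of_nonneg_right (by linarith) (inv_nonneg.mpr hS.le)
end

section
/- Let (x_k) be generated by the inexact PPA iteration applied to the λ-cocoercive operator F, and suppose F(x_*) = 0. Then (x_k) converges weakly to some x̄ ∈ H with F(x̄) = 0 (weak convergence meaning ⟨x_k, y⟩ → ⟨x̄, y⟩ for every y ∈ H). -/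
open Filter Topology
open scoped InnerProductSpace

/-- A nonnegative sequence with `d (k+1) ≤ d k + δ k`, `δ` summable nonneg, converges. -/
lemma aux_tendsto_quasi {d δ : ℕ → ℝ} (hd : ∀ k, 0 ≤ d k) (hδ0 : ∀ k, 0 ≤ δ k)
    (hδ : Summable δ) (h : ∀ k, d (k + 1) ≤ d k + δ k) : ∃ l, Tendsto d atTop (𝓝 l) := by
  set t : ℕ → ℝ := fun k => ∑' j, δ (j + k) with ht
  have hts : ∀ k, Summable fun j => δ (j + k) := fun k => (summable_nat_add_iff k).2 hδ
  have ht0 : Tendsto t atTop (𝓝 0) := by simpa [ht] using tendsto_sum_nat_add (f := δ)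
  have htstep : ∀ k, t k = δ k + t (k + 1) := by
    intro k
    have := Summable.tsum_eq_zero_add (hts k)
    simpa [ht, add_assoc, add_comm, add_left_comm] using this
  have htnn : ∀ k, 0 ≤ t k := fun k => tsum_nonneg fun j => hδ0 _
  set r : ℕ → ℝ := fun k => d k + t k with hr
  have hanti : Antitone r := by
    apply antitone_nat_of_succ_le
    intro k
    have := h k
    have := htstep k
    simp only [hr]
    linarith
  have hbdd : BddBelow (Set.range r) := by
    refine ⟨0, ?_⟩
    rintro _ ⟨k, rfl⟩
    exact add_nonneg (hd k) (htnn k)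
  have hrt : Tendsto r atTop (𝓝 (⨅ i, r i)) := tendsto_atTop_ciInf hanti hbdd
  refine ⟨⨅ i, r i, ?_⟩
  have : Tendsto (fun k => r k - t k) atTop (𝓝 ((⨅ i, r i) - 0)) := hrt.sub ht0
  simpa [hr] using this

/-- cluster point of a sequence converging along `l` equals the limit -/
lemma aux_clusterPt_eq {α : Type*} {l : Filter α} [l.NeBot] {c : α → ℝ} {t L : ℝ}
    (h : MapClusterPt t l c) (h2 : Tendsto c l (𝓝 L)) : t = L :=
  eq_of_nhds_neBot (h.clusterPt.mono h2)

/-- Bounded sequences in a Hilbert space have weak cluster points along any `NeBot` filter. -/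
lemma exists_weak_clusterPt {H : Type*} [NormedAddCommGroup H] [InnerProductSpace ℝ H]
    [CompleteSpace H] (l : Filter ℕ) [l.NeBot] (y : ℕ → H) (M : ℝ) (hM : ∀ k, ‖y k‖ ≤ M) :
    ∃ w : H, ∀ v : H, MapClusterPt (⟪w, v⟫_ℝ) l (fun k => ⟪y k, v⟫_ℝ) := by
  have hcpt := WeakDual.isCompact_closedBall (𝕜 := ℝ) (E := H) 0 M
  set Φ : ℕ → WeakDual ℝ H :=
    fun k => StrongDual.toWeakDual (InnerProductSpace.toDual ℝ H (y k)) with hΦ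
  have hmem : Filter.map Φ l ≤ 𝓟 (WeakDual.toStrongDual ⁻¹' Metric.closedBall 0 M) := by
    rw [Filter.le_principal_iff, Filter.mem_map]
    apply Filter.Eventually.of_forall
    intro k
    simp only [Set.mem_preimage, Metric.mem_closedBall, dist_zero_right]
    show ‖(InnerProductSpace.toDual ℝ H) (y k)‖ ≤ M
    simpa using hM k
  obtain ⟨ψ, -, hψ⟩ := hcpt.exists_mapClusterPt hmem
  refine ⟨(InnerProductSpace.toDual ℝ H).symm (WeakDual.toStrongDual ψ), fun v => ?_⟩
  have hev : Continuous fun φ : WeakDual ℝ H => φ v := WeakDual.eval_continuous v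
  have := hψ.continuousAt_comp (hev.continuousAt)
  have heq : ((fun φ : WeakDual ℝ H => φ v) ∘ Φ) = fun k => ⟪y k, v⟫_ℝ := by
    funext k
    show ((InnerProductSpace.toDual ℝ H) (y k)) v = ⟪y k, v⟫_ℝ
    exact InnerProductSpace.toDual_apply_apply
  rw [heq] at this
  have hval : ⟪(InnerProductSpace.toDual ℝ H).symm (WeakDual.toStrongDual ψ), v⟫_ℝ = ψ v := by
    rw [← InnerProductSpace.toDual_apply_apply]
    simp
  rw [hval]
  exact this


lemma aux_demiclosed {H : Type*} [NormedAddCommGroup H] [InnerProductSpace ℝ H]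
    (lam : ℝ) (hlam : 0 < lam) (F : H → H)
    (hF : ∀ x y : H, lam * ‖F x - F y‖ ^ 2 ≤ ⟪F x - F y, x - y⟫_ℝ)
    (l : Filter ℕ) [l.NeBot] (hl : l ≤ atTop)
    (x : ℕ → H) (M : ℝ) (hM : ∀ k, ‖x k‖ ≤ M)
    (hFx : Tendsto (fun k => F (x k)) atTop (𝓝 0))
    (w : H) (hw : ∀ v : H, MapClusterPt (⟪w, v⟫_ℝ) l (fun k => ⟪x k, v⟫_ℝ)) :
    F w = 0 := by
  set c : ℕ → ℝ := fun k => ⟪w, F w⟫_ℝ - ⟪x k, F w⟫_ℝ with hc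
  have hclc : MapClusterPt (0 : ℝ) l c := by
    have h1 := (hw (F w)).continuousAt_comp
      (f := fun t : ℝ => ⟪w, F w⟫_ℝ - t) (by fun_prop)
    simpa [hc, Function.comp_def] using h1
  set h : ℕ → ℝ := fun k => lam * ‖F (x k) - F w‖ ^ 2 - ⟪F (x k), x k - w⟫_ℝ with hh
  have hch : ∀ k, h k ≤ c k := by
    intro k
    have h1 := hF (x k) w
    have h2 : ⟪F (x k) - F w, x k - w⟫_ℝ
        = ⟪F (x k), x k - w⟫_ℝ - (⟪x k, F w⟫_ℝ - ⟪w, F w⟫_ℝ) := by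
      rw [inner_sub_left, inner_sub_right, inner_sub_right, real_inner_comm (x k) (F w),
        real_inner_comm w (F w)]
    simp only [hh, hc]
    rw [h2] at h1
    linarith
  have hht : Tendsto h atTop (𝓝 (lam * ‖F w‖ ^ 2)) := by
    have h1 : Tendsto (fun k => lam * ‖F (x k) - F w‖ ^ 2) atTop (𝓝 (lam * ‖F w‖ ^ 2)) := by
      have : Continuous fun v : H => lam * ‖v - F w‖ ^ 2 := by fun_prop
      have := (this.tendsto 0).comp hFx
      simpa [Function.comp_def] using this
    have h2 : Tendsto (fun k => ⟪F (x k), x k - w⟫_ℝ) atTop (𝓝 0) := by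
      apply squeeze_zero_norm (a := fun k => ‖F (x k)‖ * (M + ‖w‖))
      · intro k
        calc ‖⟪F (x k), x k - w⟫_ℝ‖ ≤ ‖F (x k)‖ * ‖x k - w‖ := by
              exact abs_real_inner_le_norm _ _
          _ ≤ ‖F (x k)‖ * (M + ‖w‖) := by
              apply mul_le_mul_of_nonneg_left _ (norm_nonneg _)
              exact (norm_sub_le _ _).trans (by linarith [hM k])
      · have : Tendsto (fun k => ‖F (x k)‖) atTop (𝓝 0) := by
          simpa using hFx.norm
        simpa using this.mul_const (M + ‖w‖)
    simpa using h1.sub h2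
  have hkey : lam * ‖F w‖ ^ 2 ≤ 0 := by
    by_contra hpos
    push_neg at hpos
    have hev : ∀ᶠ k in l, lam * ‖F w‖ ^ 2 / 2 < h k :=
      (hht.mono_left hl).eventually (eventually_gt_nhds (by linarith))
    have hev2 : ∀ᶠ k in l, lam * ‖F w‖ ^ 2 / 2 < c k :=
      hev.mono fun k hk => lt_of_lt_of_le hk (hch k)
    have hfreq : ∃ᶠ k in l, c k < lam * ‖F w‖ ^ 2 / 2 :=
      (mapClusterPt_iff_frequently.1 hclc) _ (eventually_lt_nhds (by linarith) : _)
    obtain ⟨k, h1, h2⟩ := (hfreq.and_eventually hev2).exists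
    linarith
  have hsq : ‖F w‖ ^ 2 = 0 := by nlinarith [sq_nonneg ‖F w‖]
  have : ‖F w‖ = 0 := by
    have := pow_eq_zero_iff (n := 2) (by norm_num) |>.1 hsq
    exact this
  exact norm_eq_zero.1 this


/-- The inexact PPA iteration applied to a λ-cocoercive operator `F` with
`F x_* = 0` converges weakly to a zero of `F`. -/
theorem ppa_weak_convergence
    {H : Type*} [NormedAddCommGroup H] [InnerProductSpace ℝ H] [CompleteSpace H]
    (lam : ℝ) (hlam : 0 < lam) (F : H → H)
    (hF : ∀ x y : H, lam * ‖F x - F y‖ ^ 2 ≤ ⟪F x - F y, x - y⟫_ℝ)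
    (ε : ℝ) (hε : 0 < ε) (a : ℕ → ℝ) (ha : ∀ k, ε ≤ a (k + 1))
    (δ : ℕ → ℝ) (hδ0 : ∀ k, 0 ≤ δ k) (hδ : Summable δ)
    (g : ℕ → H) (hg : ∀ k, ‖g k‖ ≤ δ k)
    (x : ℕ → H)
    (hx : ∀ k, (0 : H) = a (k + 1) • F (x (k + 1)) + x (k + 1) - x k + g k)
    (xs : H) (hxs : F xs = 0) :
    ∃ xb : H, F xb = 0 ∧
      ∀ y : H, Tendsto (fun k => ⟪x k, y⟫_ℝ) atTop (𝓝 ⟪xb, y⟫_ℝ) := by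
  -- basic recursion
  have hrec : ∀ (z : H) (k : ℕ),
      x (k + 1) - z = (x k - z - g k) - a (k + 1) • F (x (k + 1)) := by
    intro z k
    have h0' : a (k + 1) • F (x (k + 1)) + x (k + 1) - x k + g k = 0 := (hx k).symm
    have h1 : x (k + 1) - z - ((x k - z - g k) - a (k + 1) • F (x (k + 1))) = 0 := by
      rw [← h0']; abel
    exact sub_eq_zero.1 h1
  -- cocoercivity at zeros
  have hmono : ∀ (z : H), F z = 0 → ∀ u : H, lam * ‖F u‖ ^ 2 ≤ ⟪F u, u - z⟫_ℝ := by
    intro z hz u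
    simpa [hz] using hF u z
  have hmono0 : ∀ (z : H), F z = 0 → ∀ u : H, 0 ≤ ⟪F u, u - z⟫_ℝ := by
    intro z hz u
    exact le_trans (by positivity) (hmono z hz u)
  have hapos : ∀ k, 0 < a (k + 1) := fun k => lt_of_lt_of_le hε (ha k)
  -- quasi-Fejér property
  have hfej : ∀ (z : H), F z = 0 → ∀ k, ‖x (k + 1) - z‖ ≤ ‖x k - z‖ + δ k := by
    intro z hz k
    set u := x (k + 1) - z with hu
    set b := x k - z - g k with hb
    have h1 : ‖u‖ ^ 2 ≤ ‖b‖ * ‖u‖ := by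
      have e1 : (‖u‖ : ℝ) ^ 2 = ⟪u, u⟫_ℝ := (real_inner_self_eq_norm_sq _).symm
      have e2 : ⟪u, u⟫_ℝ = ⟪b, u⟫_ℝ - a (k + 1) * ⟪F (x (k + 1)), u⟫_ℝ := by
        nth_rw 2 [hu]
        rw [hrec z k, ← hb, inner_sub_right, real_inner_smul_right,
          real_inner_comm u b, real_inner_comm u (F (x (k + 1)))]
      have h3 : 0 ≤ ⟪F (x (k + 1)), u⟫_ℝ := hmono0 z hz (x (k + 1))
      have h4 : ⟪b, u⟫_ℝ ≤ ‖b‖ * ‖u‖ := real_inner_le_norm _ _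
      have h5 := mul_nonneg (hapos k).le h3
      rw [e1, e2]; linarith
    have h4 : ‖b‖ ≤ ‖x k - z‖ + δ k := (norm_sub_le _ _).trans (by linarith [hg k])
    nlinarith [norm_nonneg u, norm_nonneg b, norm_nonneg (x k - z), hδ0 k,
      mul_le_mul_of_nonneg_right h4 (norm_nonneg u)]
  -- convergence of distances to zeros
  have hconv : ∀ (z : H), F z = 0 → ∃ L, Tendsto (fun k => ‖x k - z‖) atTop (𝓝 L) := by
    intro z hz
    exact aux_tendsto_quasi (fun k => norm_nonneg _) hδ0 hδ (hfej z hz)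
  -- bounds
  set S := ∑' k, δ k with hS
  have hS0 : 0 ≤ S := tsum_nonneg hδ0
  have hsum_le : ∀ n, ∑ j ∈ Finset.range n, δ j ≤ S := fun n =>
    hδ.sum_le_tsum _ (fun i _ => hδ0 i)
  have hδle : ∀ k, δ k ≤ S := fun k => hδ.le_tsum k (fun i _ => hδ0 i)
  have hdpart : ∀ k, ‖x k - xs‖ ≤ ‖x 0 - xs‖ + ∑ j ∈ Finset.range k, δ j := by
    intro k
    induction k with
    | zero => simp
    | succ n ih =>
      calc ‖x (n + 1) - xs‖ ≤ ‖x n - xs‖ + δ n := hfej xs hxs n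
        _ ≤ ‖x 0 - xs‖ + ∑ j ∈ Finset.range n, δ j + δ n := by linarith
        _ = ‖x 0 - xs‖ + ∑ j ∈ Finset.range (n + 1), δ j := by
            rw [Finset.sum_range_succ]; ring
  have hdb : ∀ k, ‖x k - xs‖ ≤ ‖x 0 - xs‖ + S := fun k =>
    (hdpart k).trans (by linarith [hsum_le k])
  set M := ‖x 0 - xs‖ + S + ‖xs‖ with hM'
  have hM : ∀ k, ‖x k‖ ≤ M := by
    intro k
    calc ‖x k‖ = ‖x k - xs + xs‖ := by rw [sub_add_cancel]
      _ ≤ ‖x k - xs‖ + ‖xs‖ := norm_add_le _ _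
      _ ≤ M := by simp only [hM']; linarith [hdb k]
  -- key squared inequality and summability of ‖F (x (k+1))‖²
  set B := ‖x 0 - xs‖ + 2 * S with hB
  have hstep : ∀ k, 2 * ε * lam * ‖F (x (k + 1))‖ ^ 2 ≤
      ‖x k - xs‖ ^ 2 - ‖x (k + 1) - xs‖ ^ 2 + 2 * B * δ k := by
    intro k
    set u := x (k + 1) - xs with hu
    set v := F (x (k + 1)) with hv
    set b := x k - xs - g k with hb
    have hbB : ‖b‖ ≤ B := by
      have := (norm_sub_le (x k - xs) (g k)).trans (by linarith [hg k, hδle k, hdb k] :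
        ‖x k - xs‖ + ‖g k‖ ≤ B)
      exact this
    have hxb : x k - xs = b + g k := by rw [hb]; abel
    have e1 : ‖x k - xs‖ ^ 2 = ‖b‖ ^ 2 + 2 * ⟪b, g k⟫_ℝ + ‖g k‖ ^ 2 := by
      rw [hxb]; exact norm_add_sq_real b (g k)
    have e2 : ‖b‖ ^ 2 = ‖u‖ ^ 2 + 2 * (a (k + 1) * ⟪u, v⟫_ℝ) + ‖a (k + 1) • v‖ ^ 2 := by
      have hbu : b = u + a (k + 1) • v := by
        rw [hu, hrec xs k, ← hb, hv]; abel
      rw [hbu, norm_add_sq_real, real_inner_smul_right]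
    have h3 : lam * ‖v‖ ^ 2 ≤ ⟪v, u⟫_ℝ := hmono xs hxs (x (k + 1))
    have h4 : ε * (lam * ‖v‖ ^ 2) ≤ a (k + 1) * ⟪u, v⟫_ℝ := by
      rw [real_inner_comm v u]
      have h5 : 0 ≤ ⟪v, u⟫_ℝ := le_trans (by positivity) h3
      have := mul_le_mul_of_nonneg_right (ha k) h5
      nlinarith [mul_le_mul_of_nonneg_left h3 hε.le]
    have h6 : -(‖b‖ * δ k) ≤ ⟪b, g k⟫_ℝ := by
      have := abs_real_inner_le_norm b (g k)
      have h7 : ‖b‖ * ‖g k‖ ≤ ‖b‖ * δ k :=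
        mul_le_mul_of_nonneg_left (hg k) (norm_nonneg b)
      have := abs_le.1 this
      linarith [this.1]
    have h8 : ‖b‖ * δ k ≤ B * δ k := mul_le_mul_of_nonneg_right hbB (hδ0 k)
    nlinarith [sq_nonneg ‖g k‖, sq_nonneg ‖a (k + 1) • v‖]
  have hsumF : Summable fun k => ‖F (x (k + 1))‖ ^ 2 := by
    have hC : ∀ n, ∑ k ∈ Finset.range n, 2 * ε * lam * ‖F (x (k + 1))‖ ^ 2 ≤
        ‖x 0 - xs‖ ^ 2 + 2 * B * S := by
      intro n
      have htel : ∑ k ∈ Finset.range n, (‖x k - xs‖ ^ 2 - ‖x (k + 1) - xs‖ ^ 2) =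
          ‖x 0 - xs‖ ^ 2 - ‖x n - xs‖ ^ 2 := Finset.sum_range_sub' (fun k => ‖x k - xs‖ ^ 2) n
      calc ∑ k ∈ Finset.range n, 2 * ε * lam * ‖F (x (k + 1))‖ ^ 2
          ≤ ∑ k ∈ Finset.range n, (‖x k - xs‖ ^ 2 - ‖x (k + 1) - xs‖ ^ 2 + 2 * B * δ k) :=
            Finset.sum_le_sum fun k _ => hstep k
        _ = (‖x 0 - xs‖ ^ 2 - ‖x n - xs‖ ^ 2) + 2 * B * ∑ k ∈ Finset.range n, δ k := by
            rw [Finset.sum_add_distrib, htel, ← Finset.mul_sum]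
        _ ≤ ‖x 0 - xs‖ ^ 2 + 2 * B * S := by
            have hB0 : 0 ≤ B := by simp only [hB]; positivity
            nlinarith [sq_nonneg ‖x n - xs‖, hsum_le n, mul_le_mul_of_nonneg_left (hsum_le n) hB0]
    have hpos : (0 : ℝ) < 2 * ε * lam := by positivity
    have h1 : Summable fun k => 2 * ε * lam * ‖F (x (k + 1))‖ ^ 2 :=
      summable_of_sum_range_le (fun k => by positivity) hC
    have h2 := h1.mul_left ((2 * ε * lam)⁻¹)
    refine (summable_congr ?_).1 h2
    intro k
    field_simp
  have hFx : Tendsto (fun k => F (x k)) atTop (𝓝 0) := by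
    have h1 : Tendsto (fun k => ‖F (x (k + 1))‖ ^ 2) atTop (𝓝 0) := hsumF.tendsto_atTop_zero
    have h2 : Tendsto (fun k => ‖F (x (k + 1))‖) atTop (𝓝 0) := by
      have := (Real.continuous_sqrt.tendsto 0).comp h1
      simpa [Function.comp_def, Real.sqrt_zero, Real.sqrt_sq (norm_nonneg _)] using this
    have h3 : Tendsto (fun k => F (x (k + 1))) atTop (𝓝 0) :=
      tendsto_zero_iff_norm_tendsto_zero.2 h2
    exact (tendsto_add_atTop_iff_nat 1).1 h3
  -- Opial-type limits
  have hOp : ∀ (z₁ z₂ : H), F z₁ = 0 → F z₂ = 0 →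
      ∃ L, Tendsto (fun k => ⟪x k, z₁ - z₂⟫_ℝ) atTop (𝓝 L) := by
    intro z₁ z₂ h₁ h₂
    obtain ⟨L₁, hL₁⟩ := hconv z₁ h₁
    obtain ⟨L₂, hL₂⟩ := hconv z₂ h₂
    refine ⟨(L₂ ^ 2 - L₁ ^ 2 + ‖z₁‖ ^ 2 - ‖z₂‖ ^ 2) / 2, ?_⟩
    have heq : (fun k => ⟪x k, z₁ - z₂⟫_ℝ) =
        fun k => (‖x k - z₂‖ ^ 2 - ‖x k - z₁‖ ^ 2 + ‖z₁‖ ^ 2 - ‖z₂‖ ^ 2) / 2 := by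
      funext k
      have e1 := norm_sub_sq_real (x k) z₁
      have e2 := norm_sub_sq_real (x k) z₂
      have e3 : ⟪x k, z₁ - z₂⟫_ℝ = ⟪x k, z₁⟫_ℝ - ⟪x k, z₂⟫_ℝ := inner_sub_right _ _ _
      rw [e3]; linarith
    rw [heq]
    exact (((((hL₂.pow 2).sub (hL₁.pow 2)).add tendsto_const_nhds).sub
      tendsto_const_nhds).div_const 2)
  -- uniqueness of weak cluster points that are zeros
  have huniq : ∀ (w₁ w₂ : H), F w₁ = 0 → F w₂ = 0 → ∀ (l₁ l₂ : Filter ℕ),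
      l₁.NeBot → l₂.NeBot → l₁ ≤ atTop → l₂ ≤ atTop →
      (∀ v : H, MapClusterPt (⟪w₁, v⟫_ℝ) l₁ (fun k => ⟪x k, v⟫_ℝ)) →
      (∀ v : H, MapClusterPt (⟪w₂, v⟫_ℝ) l₂ (fun k => ⟪x k, v⟫_ℝ)) → w₁ = w₂ := by
    intro w₁ w₂ h₁ h₂ l₁ l₂ hn₁ hn₂ hle₁ hle₂ hc₁ hc₂
    obtain ⟨L, hL⟩ := hOp w₁ w₂ h₁ h₂
    haveI := hn₁; haveI := hn₂
    have e₁ : ⟪w₁, w₁ - w₂⟫_ℝ = L := aux_clusterPt_eq (hc₁ (w₁ - w₂)) (hL.mono_left hle₁)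
    have e₂ : ⟪w₂, w₁ - w₂⟫_ℝ = L := aux_clusterPt_eq (hc₂ (w₁ - w₂)) (hL.mono_left hle₂)
    have : ⟪w₁ - w₂, w₁ - w₂⟫_ℝ = 0 := by
      rw [inner_sub_left]; linarith
    have := inner_self_eq_zero.1 this
    exact sub_eq_zero.1 this
  -- main assembly
  obtain ⟨w, hw⟩ := exists_weak_clusterPt atTop x M hM
  have hFw : F w = 0 := aux_demiclosed lam hlam F hF atTop le_rfl x M hM hFx w hw
  refine ⟨w, hFw, fun y => ?_⟩
  apply (isCompact_Icc (a := -(M * ‖y‖)) (b := M * ‖y‖)).tendsto_nhds_of_unique_mapClusterPt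
  · apply Eventually.of_forall
    intro k
    have h1 : |⟪x k, y⟫_ℝ| ≤ ‖x k‖ * ‖y‖ := abs_real_inner_le_norm _ _
    have h2 : ‖x k‖ * ‖y‖ ≤ M * ‖y‖ := mul_le_mul_of_nonneg_right (hM k) (norm_nonneg y)
    have := abs_le.1 (h1.trans h2)
    exact Set.mem_Icc.2 this
  · intro t _ hcl
    set l₂ := comap (fun k => ⟪x k, y⟫_ℝ) (𝓝 t) ⊓ atTop with hl₂'
    haveI hnb : l₂.NeBot := neBot_inf_comap_iff_map'.2 hcl.clusterPt
    have hl₂ : l₂ ≤ atTop := inf_le_right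
    have htend : Tendsto (fun k => ⟪x k, y⟫_ℝ) l₂ (𝓝 t) := by
      rw [tendsto_iff_comap]; exact inf_le_left
    obtain ⟨w', hw'⟩ := exists_weak_clusterPt l₂ x M hM
    have hFw' : F w' = 0 := aux_demiclosed lam hlam F hF l₂ hl₂ x M hM hFx w' hw'
    have hww : w' = w := huniq w' w hFw' hFw l₂ atTop hnb atTop_neBot hl₂ le_rfl hw' hw
    have := aux_clusterPt_eq (hw' y) htend
    rw [← this, hww]
end

section
/- Let (x_k) be generated by the exact PPA iteration (g_k = 0 for all k) applied to the λ-cocoercive operator F, andndsuppose F(x_*) = 0. Then there exists a constant C > 0 such that for all k ≥ 0: ‖F(x_{k+1})‖ ≤ C / √(∑_{i=0}^{k} a_{i+1}²) and Gap(x_{k+1}) ≤ C / √(∑_{i=0}^{k} a_{i+1}²). -/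
open Filter Topology
open scoped InnerProductSpace

/-- For the exact PPA iteration (`g_k = 0`) applied to a λ-cocoercive
operator `F` with `F x_* = 0`, there is `C > 0` with
`‖F(x_{k+1})‖ ≤ C / √(∑_{i=0}^k a_{i+1}²)` and `Gap(x_{k+1}) ≤ C / √(∑_{i=0}^k a_{i+1}²)`. -/
theorem exact_ppa_nonergodic_rates
    {H : Type*} [NormedAddCommGroup H] [InnerProductSpace ℝ H] [CompleteSpace H]
    (lam : ℝ) (hlam : 0 < lam) (F : H → H)
    (hF : ∀ x y : H, lam * ‖F x - F y‖ ^ 2 ≤ ⟪F x - F y, x - y⟫_ℝ)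
    (x₀ : H) (D : ℝ) (hD : 0 < D)
    (Gap : H → ℝ)
    (hGap : ∀ z : H, Gap z = ⨆ y : Metric.closedBall x₀ D, ⟪z - (y : H), F (y : H)⟫_ℝ)
    (ε : ℝ) (hε : 0 < ε) (a : ℕ → ℝ) (ha : ∀ k, ε ≤ a (k + 1))
    (x : ℕ → H)
    (hx : ∀ k, (0 : H) = a (k + 1) • F (x (k + 1)) + x (k + 1) - x k)
    (xs : H) (hxs : F xs = 0) :
    ∃ C : ℝ, 0 < C ∧ ∀ k,
      ‖F (x (k + 1))‖ ≤ C / Real.sqrt (∑ i ∈ Finset.range (k + 1), a (i + 1) ^ 2) ∧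
      Gap (x (k + 1)) ≤ C / Real.sqrt (∑ i ∈ Finset.range (k + 1), a (i + 1) ^ 2) := by
  -- step equation
  have hstep : ∀ k, a (k + 1) • F (x (k + 1)) + x (k + 1) = x k := by
    intro k
    exact sub_eq_zero.mp (hx k).symm
  have ha' : ∀ k, (0:ℝ) < a (k + 1) := fun k => lt_of_lt_of_le hε (ha k)
  -- per-step decrease
  have key : ∀ k, ‖x (k + 1) - xs‖ ^ 2 + a (k + 1) ^ 2 * ‖F (x (k + 1))‖ ^ 2
      ≤ ‖x k - xs‖ ^ 2 := by
    intro k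
    have hexp : x k - xs = (x (k + 1) - xs) + a (k + 1) • F (x (k + 1)) := by
      rw [← hstep k]; abel
    have hmono : 0 ≤ ⟪F (x (k + 1)), x (k + 1) - xs⟫_ℝ := by
      have h := hF (x (k + 1)) xs
      rw [hxs, sub_zero] at h
      nlinarith [sq_nonneg ‖F (x (k + 1))‖]
    rw [hexp, norm_add_sq_real, real_inner_smul_right, norm_smul, Real.norm_eq_abs,
      mul_pow, sq_abs]
    have hcomm : ⟪x (k + 1) - xs, F (x (k + 1))⟫_ℝ = ⟪F (x (k + 1)), x (k + 1) - xs⟫_ℝ :=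
      real_inner_comm _ _
    nlinarith [ha' k, hmono]
  -- cumulative bound
  have cum : ∀ k, ‖x (k + 1) - xs‖ ^ 2
      + ∑ i ∈ Finset.range (k + 1), a (i + 1) ^ 2 * ‖F (x (i + 1))‖ ^ 2
      ≤ ‖x 0 - xs‖ ^ 2 := by
    intro k
    induction k with
    | zero => simpa using key 0
    | succ n ih =>
      rw [Finset.sum_range_succ]
      have h := key (n + 1)
      linarith
  -- monotonicity of residual norms
  have Fmono : ∀ k, ‖F (x (k + 1))‖ ≤ ‖F (x k)‖ := by
    intro k
    have hd : x (k + 1) - x k = -(a (k + 1) • F (x (k + 1))) := by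
      rw [← hstep k]; abel
    have h := hF (x (k + 1)) (x k)
    rw [hd, inner_neg_right, real_inner_smul_right, inner_sub_left,
      real_inner_self_eq_norm_sq] at h
    have hcs := real_inner_le_norm (F (x k)) (F (x (k + 1)))
    have h2 : ‖F (x (k + 1))‖ ^ 2 ≤ ⟪F (x k), F (x (k + 1))⟫_ℝ := by
      nlinarith [mul_nonneg hlam.le (sq_nonneg ‖F (x (k + 1)) - F (x k)‖), ha' k]
    rcases eq_or_lt_of_le (norm_nonneg (F (x (k + 1)))) with h0 | h0
    · rw [← h0]; exact norm_nonneg _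
    · refine le_of_mul_le_mul_right ?_ h0
      nlinarith
  have Fanti : Antitone fun k => ‖F (x k)‖ := antitone_nat_of_succ_le Fmono
  set R := ‖x 0 - xs‖ with hR
  have hR0 : 0 ≤ R := norm_nonneg _
  -- sum bound for the last residual
  have Sle : ∀ k, (∑ i ∈ Finset.range (k + 1), a (i + 1) ^ 2) * ‖F (x (k + 1))‖ ^ 2
      ≤ R ^ 2 := by
    intro k
    have h1 : (∑ i ∈ Finset.range (k + 1), a (i + 1) ^ 2) * ‖F (x (k + 1))‖ ^ 2
        = ∑ i ∈ Finset.range (k + 1), a (i + 1) ^ 2 * ‖F (x (k + 1))‖ ^ 2 :=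
      Finset.sum_mul _ _ _
    have h2 : ∑ i ∈ Finset.range (k + 1), a (i + 1) ^ 2 * ‖F (x (k + 1))‖ ^ 2
        ≤ ∑ i ∈ Finset.range (k + 1), a (i + 1) ^ 2 * ‖F (x (i + 1))‖ ^ 2 := by
      refine Finset.sum_le_sum fun i hi => ?_
      have hik : i + 1 ≤ k + 1 :=
        Nat.succ_le_succ (Nat.lt_succ_iff.mp (Finset.mem_range.mp hi))
      have := Fanti hik
      have hn : ‖F (x (k + 1))‖ ^ 2 ≤ ‖F (x (i + 1))‖ ^ 2 := by
        have h0 : (0:ℝ) ≤ ‖F (x (k + 1))‖ := norm_nonneg _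
        nlinarith
      exact mul_le_mul_of_nonneg_left hn (sq_nonneg _)
    have h3 := cum k
    rw [h1]
    nlinarith [sq_nonneg ‖x (k + 1) - xs‖]
  -- Fejér bound
  have xb : ∀ k, ‖x (k + 1) - xs‖ ≤ R := by
    intro k
    have h := cum k
    have hs : 0 ≤ ∑ i ∈ Finset.range (k + 1), a (i + 1) ^ 2 * ‖F (x (i + 1))‖ ^ 2 :=
      Finset.sum_nonneg fun i _ => mul_nonneg (sq_nonneg _) (sq_nonneg _)
    nlinarith [norm_nonneg (x (k + 1) - xs)]
  -- Gap bound
  set B := R + ‖xs - x₀‖ + D with hB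
  have hB0 : 0 < B := by positivity
  have hGapb : ∀ k, Gap (x (k + 1)) ≤ B * ‖F (x (k + 1))‖ := by
    intro k
    rw [hGap]
    haveI : Nonempty (Metric.closedBall x₀ D) :=
      ⟨⟨x₀, Metric.mem_closedBall_self hD.le⟩⟩
    refine ciSup_le ?_
    rintro ⟨y, hy⟩
    have hm := hF (x (k + 1)) y
    have h0 : 0 ≤ ⟪F (x (k + 1)) - F y, x (k + 1) - y⟫_ℝ :=
      le_trans (by positivity) hm
    rw [inner_sub_left] at h0
    have hcs := real_inner_le_norm (F (x (k + 1))) (x (k + 1) - y)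
    have hyb : ‖y - x₀‖ ≤ D := by
      simpa [Metric.mem_closedBall, dist_eq_norm] using hy
    have htri : ‖x (k + 1) - y‖ ≤ B := by
      have h1 : x (k + 1) - y = (x (k + 1) - xs) + (xs - x₀) + (x₀ - y) := by abel
      calc ‖x (k + 1) - y‖ = ‖(x (k + 1) - xs) + (xs - x₀) + (x₀ - y)‖ := by rw [h1]
        _ ≤ ‖(x (k + 1) - xs) + (xs - x₀)‖ + ‖x₀ - y‖ := norm_add_le _ _
        _ ≤ ‖x (k + 1) - xs‖ + ‖xs - x₀‖ + ‖x₀ - y‖ := by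
            have := norm_add_le (x (k + 1) - xs) (xs - x₀); linarith
        _ ≤ B := by
            have h2 : ‖x₀ - y‖ = ‖y - x₀‖ := norm_sub_rev _ _
            have := xb k
            rw [h2]; simp only [hB]; linarith
    have hcomm : ⟪x (k + 1) - y, F y⟫_ℝ = ⟪F y, x (k + 1) - y⟫_ℝ := real_inner_comm _ _
    have hFnn : (0:ℝ) ≤ ‖F (x (k + 1))‖ := norm_nonneg _
    calc ⟪x (k + 1) - y, F y⟫_ℝ = ⟪F y, x (k + 1) - y⟫_ℝ := hcomm
      _ ≤ ⟪F (x (k + 1)), x (k + 1) - y⟫_ℝ := by linarith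
      _ ≤ ‖F (x (k + 1))‖ * ‖x (k + 1) - y‖ := hcs
      _ ≤ ‖F (x (k + 1))‖ * B := mul_le_mul_of_nonneg_left htri hFnn
      _ = B * ‖F (x (k + 1))‖ := mul_comm _ _
  -- assemble
  refine ⟨(B + 1) * (R + 1), by positivity, fun k => ?_⟩
  set S := ∑ i ∈ Finset.range (k + 1), a (i + 1) ^ 2 with hS
  have hSpos : 0 < S := by
    refine Finset.sum_pos (fun i _ => ?_) ⟨0, Finset.mem_range.mpr (Nat.succ_pos k)⟩
    exact pow_pos (ha' i) 2
  have hsq : 0 < Real.sqrt S := Real.sqrt_pos.mpr hSpos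
  have hFb : ‖F (x (k + 1))‖ ≤ R / Real.sqrt S := by
    rw [le_div_iff₀ hsq]
    have h1 : (‖F (x (k + 1))‖ * Real.sqrt S) ^ 2 ≤ R ^ 2 := by
      rw [mul_pow, Real.sq_sqrt hSpos.le]
      have := Sle k
      nlinarith
    nlinarith [mul_nonneg (norm_nonneg (F (x (k + 1)))) hsq.le]
  constructor
  · refine hFb.trans ((div_le_div_iff_of_pos_right hsq).mpr ?_)
    nlinarith
  · refine (hGapb k).trans ?_
    have h1 : B * ‖F (x (k + 1))‖ ≤ B * (R / Real.sqrt S) :=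
      mul_le_mul_of_nonneg_left hFb hB0.le
    refine h1.trans ?_
    rw [mul_div_assoc']
    exact (div_le_div_iff_of_pos_right hsq).mpr (by nlinarith)
end

section
/- Let (x_k) be generated by the inexact Contracting PPA recursion for the λ-cocoercive operator F, and suppose F(x_*) = 0. Then: (1) the sequence (v_k) is bounded; (2) ∑_{k≥0} |⟨v_{k+1} − x_*, g_k⟩| < ∞; (3) ∑_{k≥0} (A_k A_{k+1}/a_{k+1}) ‖F(x_{k+1}) − F(x_k)‖² < ∞; (4) ∑_{k≥0} ‖v_{k+1} − v_k‖² < ∞. -/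
open Filter Topology
open scoped InnerProductSpace

/-- For the inexact Contracting PPA with a λ-cocoercive operator `F` and
`F x_* = 0`: (1) `(v_k)` is bounded; (2) `∑ |⟨v_{k+1} − x_*, g_k⟩| < ∞`;
(3) `∑ (A_k A_{k+1}/a_{k+1})‖F(x_{k+1}) − F(x_k)‖² < ∞`; (4) `∑ ‖v_{k+1} − v_k‖² < ∞`. -/
theorem contracting_ppa_summability
    {H : Type*} [NormedAddCommGroup H] [InnerProductSpace ℝ H] [CompleteSpace H]
    (lam : ℝ) (hlam : 0 < lam) (F : H → H)
    (hF : ∀ x y : H, lam * ‖F x - F y‖ ^ 2 ≤ ⟪F x - F y, x - y⟫_ℝ)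
    (ε : ℝ) (hε : 0 < ε) (a : ℕ → ℝ) (ha : ∀ k, ε ≤ a k)
    (A : ℕ → ℝ) (hA0 : A 0 = a 0) (hA : ∀ k, A (k + 1) = a (k + 1) + A k)
    (x : ℕ → H)
    (v : ℕ → H) (hv0 : v 0 = (a 0)⁻¹ • (A 0 • x 0))
    (hv : ∀ k, v (k + 1) = (a (k + 1))⁻¹ • (A (k + 1) • x (k + 1) - A k • x k))
    (δ : ℕ → ℝ) (hδ0 : ∀ k, 0 ≤ δ k) (hδ : Summable δ)
    (g : ℕ → H) (hg : ∀ k, ‖g k‖ ≤ δ k)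
    (hx : ∀ k, (0 : H) =
      A (k + 1) • F (x (k + 1)) - A k • F (x k) + v (k + 1) - v k + g k)
    (xs : H) (hxs : F xs = 0) :
    (∃ M : ℝ, ∀ k, ‖v k‖ ≤ M) ∧
    Summable (fun k => |⟪v (k + 1) - xs, g k⟫_ℝ|) ∧
    Summable (fun k =>
      (A k * A (k + 1) / a (k + 1)) * ‖F (x (k + 1)) - F (x k)‖ ^ 2) ∧
    Summable (fun k => ‖v (k + 1) - v k‖ ^ 2) := by
  have hapos : ∀ k, 0 < a k := fun k => lt_of_lt_of_le hε (ha k)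
  have hApos : ∀ k, 0 < A k := by
    intro k
    induction k with
    | zero => rw [hA0]; exact hapos 0
    | succ n ih => rw [hA n]; have := hapos (n+1); linarith
  have hcoco : ∀ y : H, lam * ‖F y‖ ^ 2 ≤ ⟪F y, y - xs⟫_ℝ := by
    intro y
    have h := hF y xs
    rw [hxs] at h
    simpa using h
  have hinn : ∀ y : H, 0 ≤ ⟪F y, y - xs⟫_ℝ := by
    intro y
    refine le_trans ?_ (hcoco y)
    positivity
  -- the Lyapunov function
  obtain ⟨E, hEdef⟩ : ∃ E : ℕ → ℝ, ∀ k,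
      E k = ‖v k - xs‖ ^ 2 + 2 * A k * ⟪F (x k), x k - xs⟫_ℝ :=
    ⟨fun k => ‖v k - xs‖ ^ 2 + 2 * A k * ⟪F (x k), x k - xs⟫_ℝ, fun k => rfl⟩
  have hEnn : ∀ k, 0 ≤ E k := by
    intro k
    have h1 := hinn (x k)
    have h2 := (hApos k).le
    have h3 := sq_nonneg ‖v k - xs‖
    rw [hEdef]
    nlinarith
  have hEw : ∀ k, ‖v k - xs‖ ^ 2 ≤ E k := by
    intro k
    have h1 := hinn (x k)
    have h2 := (hApos k).le
    rw [hEdef]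
    nlinarith
  have hwsqrt : ∀ k, ‖v k - xs‖ ≤ Real.sqrt (E k) := by
    intro k
    calc ‖v k - xs‖ = Real.sqrt (‖v k - xs‖ ^ 2) := (Real.sqrt_sq (norm_nonneg _)).symm
      _ ≤ Real.sqrt (E k) := Real.sqrt_le_sqrt (hEw k)
  -- key energy identity
  have key : ∀ k, E (k + 1) + ‖v (k + 1) - v k‖ ^ 2
      + (2 * A k * A (k + 1) / a (k + 1))
        * ⟪F (x (k + 1)) - F (x k), x (k + 1) - x k⟫_ℝ
      = E k - 2 * ⟪g k, v (k + 1) - xs⟫_ℝ := by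
    intro k
    have hα : 0 < a (k + 1) := hapos (k + 1)
    have hΔ : v (k + 1) - v k = A k • F (x k) - A (k + 1) • F (x (k + 1)) - g k := by
      have h := hx k
      have h2 : v (k + 1) - v k - (A k • F (x k) - A (k + 1) • F (x (k + 1)) - g k)
          = A (k + 1) • F (x (k + 1)) - A k • F (x k) + v (k + 1) - v k + g k := by abel
      rw [← sub_eq_zero, h2, ← h]
    have heq : a (k + 1) • (v (k + 1) - xs)
        = A (k + 1) • (x (k + 1) - xs) - A k • (x k - xs) := by
      rw [smul_sub, hv k, smul_inv_smul₀ hα.ne', hA k]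
      module
    have haux : ∀ b c : H, ‖b‖ ^ 2 - ‖c‖ ^ 2 + ‖b - c‖ ^ 2 = 2 * ⟪b - c, b⟫_ℝ := by
      intro b c
      rw [inner_sub_left, real_inner_self_eq_norm_sq, norm_sub_sq_real,
        real_inner_comm c b]
      ring
    have e1 : v (k + 1) - v k = (v (k + 1) - xs) - (v k - xs) := by abel
    have stepA : ‖v (k + 1) - xs‖ ^ 2 - ‖v k - xs‖ ^ 2 + ‖v (k + 1) - v k‖ ^ 2
        = 2 * ⟪v (k + 1) - v k, v (k + 1) - xs⟫_ℝ := by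
      rw [e1]
      exact haux (v (k + 1) - xs) (v k - xs)
    have E1 : ‖v (k + 1) - xs‖ ^ 2 - ‖v k - xs‖ ^ 2 + ‖v (k + 1) - v k‖ ^ 2
        = 2 * ⟪A k • F (x k) - A (k + 1) • F (x (k + 1)), v (k + 1) - xs⟫_ℝ
          - 2 * ⟪g k, v (k + 1) - xs⟫_ℝ := by
      rw [stepA, hΔ, inner_sub_left]
      ring
    have E2 : a (k + 1) * ⟪A k • F (x k) - A (k + 1) • F (x (k + 1)), v (k + 1) - xs⟫_ℝ
        = A k * A (k + 1) * ⟪F (x k), x (k + 1) - xs⟫_ℝ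
          - A k * A k * ⟪F (x k), x k - xs⟫_ℝ
          - A (k + 1) * A (k + 1) * ⟪F (x (k + 1)), x (k + 1) - xs⟫_ℝ
          + A (k + 1) * A k * ⟪F (x (k + 1)), x k - xs⟫_ℝ := by
      rw [← real_inner_smul_right, heq]
      simp only [inner_sub_left, inner_sub_right, real_inner_smul_left, real_inner_smul_right]
      ring
    have E4 : ⟪F (x (k + 1)) - F (x k), x (k + 1) - x k⟫_ℝ
        = ⟪F (x (k + 1)), x (k + 1) - xs⟫_ℝ - ⟪F (x (k + 1)), x k - xs⟫_ℝ
          - ⟪F (x k), x (k + 1) - xs⟫_ℝ + ⟪F (x k), x k - xs⟫_ℝ := by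
      have e2 : x (k + 1) - x k = (x (k + 1) - xs) - (x k - xs) := by abel
      rw [e2]
      simp only [inner_sub_left, inner_sub_right]
      ring
    -- multiplied identity
    have keyMul : a (k + 1) * (E (k + 1) + ‖v (k + 1) - v k‖ ^ 2)
        + (2 * A k * A (k + 1))
          * ⟪F (x (k + 1)) - F (x k), x (k + 1) - x k⟫_ℝ
        = a (k + 1) * (E k - 2 * ⟪g k, v (k + 1) - xs⟫_ℝ) := by
      rw [hEdef, hEdef]
      rw [hA k] at E1 E2 ⊢
      rw [E4]
      linear_combination a (k + 1) * E1 + 2 * E2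
    have hcd : (2 * A k * A (k + 1))
          * ⟪F (x (k + 1)) - F (x k), x (k + 1) - x k⟫_ℝ
        = ((E k - 2 * ⟪g k, v (k + 1) - xs⟫_ℝ)
            - (E (k + 1) + ‖v (k + 1) - v k‖ ^ 2)) * a (k + 1) := by
      linear_combination keyMul
    have hdiv : (2 * A k * A (k + 1) / a (k + 1))
          * ⟪F (x (k + 1)) - F (x k), x (k + 1) - x k⟫_ℝ
        = (E k - 2 * ⟪g k, v (k + 1) - xs⟫_ℝ)
            - (E (k + 1) + ‖v (k + 1) - v k‖ ^ 2) := by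
      rw [div_mul_eq_mul_div, hcd, mul_div_cancel_right₀ _ hα.ne']
    linarith [hdiv]
  -- positivity of the dissipation terms
  have hcross : ∀ k, 2 * lam * (A k * A (k + 1) / a (k + 1))
        * ‖F (x (k + 1)) - F (x k)‖ ^ 2
      ≤ (2 * A k * A (k + 1) / a (k + 1))
        * ⟪F (x (k + 1)) - F (x k), x (k + 1) - x k⟫_ℝ := by
    intro k
    have h1 := hF (x (k + 1)) (x k)
    have hc : 0 ≤ A k * A (k + 1) / a (k + 1) := by
      have := (hApos k).le; have := (hApos (k + 1)).le; have := (hapos (k + 1)).le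
      positivity
    calc 2 * lam * (A k * A (k + 1) / a (k + 1)) * ‖F (x (k + 1)) - F (x k)‖ ^ 2
        = 2 * (A k * A (k + 1) / a (k + 1)) * (lam * ‖F (x (k + 1)) - F (x k)‖ ^ 2) := by ring
      _ ≤ 2 * (A k * A (k + 1) / a (k + 1))
          * ⟪F (x (k + 1)) - F (x k), x (k + 1) - x k⟫_ℝ := by
          apply mul_le_mul_of_nonneg_left h1; linarith
      _ = (2 * A k * A (k + 1) / a (k + 1))
          * ⟪F (x (k + 1)) - F (x k), x (k + 1) - x k⟫_ℝ := by ring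
  have hdisnn : ∀ k, 0 ≤ (2 * A k * A (k + 1) / a (k + 1))
        * ⟪F (x (k + 1)) - F (x k), x (k + 1) - x k⟫_ℝ := by
    intro k
    refine le_trans ?_ (hcross k)
    have := (hApos k).le; have := (hApos (k + 1)).le; have := (hapos (k + 1)).le
    positivity
  -- quasi-Fejér: sqrt E grows slowly
  have hstep : ∀ k, E (k + 1) ≤ E k + 2 * δ k * Real.sqrt (E (k + 1)) := by
    intro k
    have h := key k
    have h1 := sq_nonneg ‖v (k + 1) - v k‖
    have h2 := hdisnn k
    have h3 : |⟪g k, v (k + 1) - xs⟫_ℝ| ≤ δ k * Real.sqrt (E (k + 1)) := by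
      refine le_trans (abs_real_inner_le_norm _ _) ?_
      exact mul_le_mul (hg k) (hwsqrt (k + 1)) (norm_nonneg _) (hδ0 k)
    have h4 : -(δ k * Real.sqrt (E (k + 1))) ≤ ⟪g k, v (k + 1) - xs⟫_ℝ :=
      neg_le_of_abs_le h3
    linarith
  have hs : ∀ k, Real.sqrt (E k) ≤ Real.sqrt (E 0) + 2 * ∑ j ∈ Finset.range k, δ j := by
    intro k
    induction k with
    | zero => simp
    | succ n ih =>
      have h := hstep n
      have hsn1 : Real.sqrt (E (n + 1)) ≤ Real.sqrt (E n) + 2 * δ n := by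
        by_contra hcon
        push_neg at hcon
        have e1 : Real.sqrt (E (n + 1)) ^ 2 = E (n + 1) := Real.sq_sqrt (hEnn _)
        have e0 : Real.sqrt (E n) ^ 2 = E n := Real.sq_sqrt (hEnn _)
        nlinarith [Real.sqrt_nonneg (E n), Real.sqrt_nonneg (E (n + 1)), hδ0 n]
      rw [Finset.sum_range_succ]
      linarith
  obtain ⟨D, hD0, hDk⟩ : ∃ D : ℝ, 0 ≤ D ∧ ∀ k, ∑ j ∈ Finset.range k, δ j ≤ D :=
    ⟨∑' k, δ k, tsum_nonneg hδ0, fun k => Summable.sum_le_tsum _ (fun i _ => hδ0 i) hδ⟩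
  obtain ⟨C, hC0, hvC⟩ : ∃ C : ℝ, 0 ≤ C ∧ ∀ k, ‖v k - xs‖ ≤ C := by
    refine ⟨Real.sqrt (E 0) + 2 * D, ?_, ?_⟩
    · have := Real.sqrt_nonneg (E 0); linarith
    · intro k
      refine le_trans (hwsqrt k) (le_trans (hs k) ?_)
      have := hDk k
      linarith
  -- Part 1
  have part1 : ∃ M : ℝ, ∀ k, ‖v k‖ ≤ M := by
    refine ⟨C + ‖xs‖, fun k => ?_⟩
    have : ‖v k‖ = ‖(v k - xs) + xs‖ := by rw [sub_add_cancel]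
    rw [this]
    refine le_trans (norm_add_le _ _) ?_
    have := hvC k
    linarith
  -- Part 2
  have part2 : Summable (fun k => |⟪v (k + 1) - xs, g k⟫_ℝ|) := by
    refine Summable.of_nonneg_of_le (fun k => abs_nonneg _) (fun k => ?_) (hδ.mul_left C)
    refine le_trans (abs_real_inner_le_norm _ _) ?_
    exact mul_le_mul (hvC (k + 1)) (hg k) (norm_nonneg _) hC0
  -- telescoping bound for parts 3 and 4
  have htel : ∀ n, E n + ∑ k ∈ Finset.range n,
      (‖v (k + 1) - v k‖ ^ 2 + (2 * A k * A (k + 1) / a (k + 1))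
        * ⟪F (x (k + 1)) - F (x k), x (k + 1) - x k⟫_ℝ)
      ≤ E 0 + 2 * C * ∑ k ∈ Finset.range n, δ k := by
    intro n
    induction n with
    | zero => simp
    | succ m ih =>
      rw [Finset.sum_range_succ, Finset.sum_range_succ]
      have h := key m
      have h3 : |⟪g m, v (m + 1) - xs⟫_ℝ| ≤ δ m * C := by
        refine le_trans (abs_real_inner_le_norm _ _) ?_
        exact mul_le_mul (hg m) (hvC (m + 1)) (norm_nonneg _) (hδ0 m)
      have h4 : -(δ m * C) ≤ ⟪g m, v (m + 1) - xs⟫_ℝ := neg_le_of_abs_le h3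
      linarith
  have hB : ∀ n, ∑ k ∈ Finset.range n,
      (‖v (k + 1) - v k‖ ^ 2 + (2 * A k * A (k + 1) / a (k + 1))
        * ⟪F (x (k + 1)) - F (x k), x (k + 1) - x k⟫_ℝ)
      ≤ E 0 + 2 * C * D := by
    intro n
    have h1 := htel n
    have h2 := hEnn n
    have h3 := hDk n
    nlinarith
  -- Part 4
  have part4 : Summable (fun k => ‖v (k + 1) - v k‖ ^ 2) := by
    refine summable_of_sum_range_le (c := E 0 + 2 * C * D) (fun k => sq_nonneg _) (fun n => ?_)
    refine le_trans (Finset.sum_le_sum (fun k _ => ?_)) (hB n)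
    have := hdisnn k
    linarith
  -- Part 3
  have part3' : Summable (fun k => 2 * lam * ((A k * A (k + 1) / a (k + 1))
      * ‖F (x (k + 1)) - F (x k)‖ ^ 2)) := by
    refine summable_of_sum_range_le (c := E 0 + 2 * C * D) (fun k => ?_) (fun n => ?_)
    · have := (hApos k).le; have := (hApos (k + 1)).le; have := (hapos (k + 1)).le
      positivity
    · refine le_trans (Finset.sum_le_sum (fun k _ => ?_)) (hB n)
      have h1 := hcross k
      have h2 := sq_nonneg ‖v (k + 1) - v k‖
      nlinarith
  have part3 : Summable (fun k =>
      (A k * A (k + 1) / a (k + 1)) * ‖F (x (k + 1)) - F (x k)‖ ^ 2) := by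
    have h := part3'.mul_left (2 * lam)⁻¹
    have heq : (fun k => (2 * lam)⁻¹ * (2 * lam * ((A k * A (k + 1) / a (k + 1))
        * ‖F (x (k + 1)) - F (x k)‖ ^ 2)))
        = fun k => (A k * A (k + 1) / a (k + 1)) * ‖F (x (k + 1)) - F (x k)‖ ^ 2 := by
      funext k
      field_simp
    rwa [heq] at h
  exact ⟨part1, part2, part3, part4⟩
end

section
/- Let (x_k) be generated by the inexact Contracting PPA recursion for the λ-cocoercive operator F, and suppose F(x_*) = 0. Then there exists a constant C > 0 such that for all k ≥ 0: A_{k+1} ‖F(x_{k+1})‖ ≤ C and A_{k+1} · Gap(x_{k+1}) ≤ C; that is, ‖F(x_{k+1})‖ ≤ O(1/A_{k+1}) and Gap(x_{k+1}) ≤ O(1/A_{k+1}). -/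
open Filter Topology
open scoped InnerProductSpace

private lemma inner_Q_identity {H : Type*} [NormedAddCommGroup H] [InnerProductSpace ℝ H]
    (aa A₀ A₁ : ℝ) (h : A₁ = aa + A₀) (X₀ X₁ f₀ f₁ : H) :
    ⟪A₁ • X₁ - A₀ • X₀, A₁ • f₁ - A₀ • f₀⟫_ℝ
      = aa * (A₁ * ⟪X₁, f₁⟫_ℝ - A₀ * ⟪X₀, f₀⟫_ℝ)
        + (A₀ * A₁) * ⟪X₁ - X₀, f₁ - f₀⟫_ℝ := by
  subst h
  simp only [inner_sub_left, inner_sub_right, real_inner_smul_left, real_inner_smul_right]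
  ring

private lemma sqrt_step (E₀ E₁ d : ℝ) (h0 : 0 ≤ E₀) (h1 : 0 ≤ E₁) (hd : 0 ≤ d)
    (h : E₁ ≤ E₀ + 2 * d * Real.sqrt E₁) :
    Real.sqrt E₁ ≤ Real.sqrt E₀ + 2 * d := by
  have hs0 : 0 ≤ Real.sqrt E₀ := Real.sqrt_nonneg _
  have hs1 : 0 ≤ Real.sqrt E₁ := Real.sqrt_nonneg _
  have e0 : Real.sqrt E₀ ^ 2 = E₀ := Real.sq_sqrt h0
  have e1 : Real.sqrt E₁ ^ 2 = E₁ := Real.sq_sqrt h1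
  nlinarith [sq_nonneg (Real.sqrt E₁ - Real.sqrt E₀), mul_nonneg hd hs0, mul_nonneg hd hs1]

/-- For the inexact Contracting PPA with a λ-cocoercive operator `F` and
`F x_* = 0`, there is `C > 0` with `A_{k+1}‖F(x_{k+1})‖ ≤ C` and
`A_{k+1}·Gap(x_{k+1}) ≤ C` for all `k`. -/
theorem contracting_ppa_rates
    {H : Type*} [NormedAddCommGroup H] [InnerProductSpace ℝ H] [CompleteSpace H]
    (lam : ℝ) (hlam : 0 < lam) (F : H → H)
    (hF : ∀ x y : H, lam * ‖F x - F y‖ ^ 2 ≤ ⟪F x - F y, x - y⟫_ℝ)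
    (D : ℝ) (hD : 0 < D)
    (ε : ℝ) (hε : 0 < ε) (a : ℕ → ℝ) (ha : ∀ k, ε ≤ a k)
    (A : ℕ → ℝ) (hA0 : A 0 = a 0) (hA : ∀ k, A (k + 1) = a (k + 1) + A k)
    (x : ℕ → H)
    (Gap : H → ℝ)
    (hGap : ∀ z : H,
      Gap z = ⨆ y : Metric.closedBall (x 0) D, ⟪z - (y : H), F (y : H)⟫_ℝ)
    (v : ℕ → H) (hv0 : v 0 = (a 0)⁻¹ • (A 0 • x 0))
    (hv : ∀ k, v (k + 1) = (a (k + 1))⁻¹ • (A (k + 1) • x (k + 1) - A k • x k))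
    (δ : ℕ → ℝ) (hδ0 : ∀ k, 0 ≤ δ k) (hδ : Summable δ)
    (g : ℕ → H) (hg : ∀ k, ‖g k‖ ≤ δ k)
    (hx : ∀ k, (0 : H) =
      A (k + 1) • F (x (k + 1)) - A k • F (x k) + v (k + 1) - v k + g k)
    (xs : H) (hxs : F xs = 0) :
    ∃ C : ℝ, 0 < C ∧ ∀ k,
      A (k + 1) * ‖F (x (k + 1))‖ ≤ C ∧ A (k + 1) * Gap (x (k + 1)) ≤ C := by
  have hapos : ∀ k, 0 < a k := fun k => lt_of_lt_of_le hε (ha k)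
  have hApos : ∀ k, 0 < A k := by
    intro k; induction k with
    | zero => rw [hA0]; exact hapos 0
    | succ n ih => rw [hA n]; exact add_pos (hapos (n + 1)) ih
  have hv0' : v 0 = x 0 := by
    rw [hv0, hA0, smul_smul, inv_mul_cancel₀ (hapos 0).ne', one_smul]
  -- cocoercivity at xs
  have hp : ∀ k, lam * ‖F (x k)‖ ^ 2 ≤ ⟪x k - xs, F (x k)⟫_ℝ := by
    intro k
    have h := hF (x k) xs
    rw [hxs, sub_zero] at h
    calc lam * ‖F (x k)‖ ^ 2 ≤ ⟪F (x k), x k - xs⟫_ℝ := h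
      _ = ⟪x k - xs, F (x k)⟫_ℝ := real_inner_comm _ _
  have hpnn : ∀ k, 0 ≤ ⟪x k - xs, F (x k)⟫_ℝ := fun k =>
    le_trans (mul_nonneg hlam.le (sq_nonneg _)) (hp k)
  -- the key relation for v
  have hvrel : ∀ k, a (k + 1) • (v (k + 1) - xs)
      = A (k + 1) • (x (k + 1) - xs) - A k • (x k - xs) := by
    intro k
    have h1 : a (k + 1) • v (k + 1) = A (k + 1) • x (k + 1) - A k • x k := by
      rw [hv k, smul_smul, mul_inv_cancel₀ (hapos (k + 1)).ne', one_smul]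
    rw [smul_sub, h1, hA k]
    simp only [smul_sub, add_smul]
    abel
  -- Lyapunov energy
  set E : ℕ → ℝ := fun k =>
    ‖v k - xs‖ ^ 2 + 2 * (A k * ⟪x k - xs, F (x k)⟫_ℝ) with hEdef
  have hEnn : ∀ k, 0 ≤ E k := by
    intro k
    simp only [hEdef]
    exact add_nonneg (sq_nonneg _)
      (mul_nonneg (by norm_num) (mul_nonneg (hApos k).le (hpnn k)))
  have hvE2 : ∀ k, ‖v k - xs‖ ^ 2 ≤ E k := by
    intro k
    simp only [hEdef]
    exact le_add_of_nonneg_right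
      (mul_nonneg (by norm_num) (mul_nonneg (hApos k).le (hpnn k)))
  have hvE : ∀ k, ‖v k - xs‖ ≤ Real.sqrt (E k) := by
    intro k
    calc ‖v k - xs‖ = Real.sqrt (‖v k - xs‖ ^ 2) := (Real.sqrt_sq (norm_nonneg _)).symm
      _ ≤ Real.sqrt (E k) := Real.sqrt_le_sqrt (hvE2 k)
  -- step inequality
  have hstepE : ∀ k, E (k + 1) ≤ E k + 2 * δ k * ‖v (k + 1) - xs‖ := by
    intro k
    have h1 : v (k + 1) - v k = -(A (k + 1) • F (x (k + 1)) - A k • F (x k)) - g k := by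
      have h := hx k
      rw [← sub_eq_zero]
      have h3 : (v (k + 1) - v k) - (-(A (k + 1) • F (x (k + 1)) - A k • F (x k)) - g k)
          = A (k + 1) • F (x (k + 1)) - A k • F (x k) + v (k + 1) - v k + g k := by abel
      rw [h3, ← h]
    have h2 : ‖v k - xs‖ ^ 2 = ‖v (k + 1) - xs‖ ^ 2
        - 2 * ⟪v (k + 1) - xs, v (k + 1) - v k⟫_ℝ + ‖v (k + 1) - v k‖ ^ 2 := by
      have h := norm_sub_sq_real (v (k + 1) - xs) (v (k + 1) - v k)
      rwa [show (v (k + 1) - xs) - (v (k + 1) - v k) = v k - xs from by abel] at h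
    have h3 : ⟪v (k + 1) - xs, v (k + 1) - v k⟫_ℝ
        = -⟪v (k + 1) - xs, A (k + 1) • F (x (k + 1)) - A k • F (x k)⟫_ℝ
          - ⟪v (k + 1) - xs, g k⟫_ℝ := by
      rw [h1, inner_sub_right, inner_neg_right]
    have h45 : a (k + 1) * ⟪v (k + 1) - xs, A (k + 1) • F (x (k + 1)) - A k • F (x k)⟫_ℝ
        = a (k + 1) * (A (k + 1) * ⟪x (k + 1) - xs, F (x (k + 1))⟫_ℝ
            - A k * ⟪x k - xs, F (x k)⟫_ℝ)
          + (A k * A (k + 1)) * ⟪(x (k + 1) - xs) - (x k - xs), F (x (k + 1)) - F (x k)⟫_ℝ := by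
      calc a (k + 1) * ⟪v (k + 1) - xs, A (k + 1) • F (x (k + 1)) - A k • F (x k)⟫_ℝ
          = ⟪a (k + 1) • (v (k + 1) - xs), A (k + 1) • F (x (k + 1)) - A k • F (x k)⟫_ℝ :=
            (real_inner_smul_left _ _ _).symm
        _ = ⟪A (k + 1) • (x (k + 1) - xs) - A k • (x k - xs),
              A (k + 1) • F (x (k + 1)) - A k • F (x k)⟫_ℝ := by rw [hvrel k]
        _ = _ := inner_Q_identity (a (k + 1)) (A k) (A (k + 1)) (hA k)
              (x k - xs) (x (k + 1) - xs) (F (x k)) (F (x (k + 1)))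
    have hcoc : 0 ≤ ⟪(x (k + 1) - xs) - (x k - xs), F (x (k + 1)) - F (x k)⟫_ℝ := by
      have h := hF (x (k + 1)) (x k)
      rw [show (x (k + 1) - xs) - (x k - xs) = x (k + 1) - x k from by abel,
        real_inner_comm]
      exact le_trans (mul_nonneg hlam.le (sq_nonneg _)) h
    have hgb : -(δ k * ‖v (k + 1) - xs‖) ≤ ⟪v (k + 1) - xs, g k⟫_ℝ := by
      have h := abs_real_inner_le_norm (v (k + 1) - xs) (g k)
      have h' := (abs_le.mp h).1
      have h2' : ‖v (k + 1) - xs‖ * ‖g k‖ ≤ δ k * ‖v (k + 1) - xs‖ := by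
        rw [mul_comm]
        exact mul_le_mul_of_nonneg_right (hg k) (norm_nonneg _)
      linarith
    have key : a (k + 1) * (E (k + 1) - E k)
        = -(2 * a (k + 1)) * ⟪v (k + 1) - xs, g k⟫_ℝ
          - a (k + 1) * ‖v (k + 1) - v k‖ ^ 2
          - 2 * ((A k * A (k + 1))
              * ⟪(x (k + 1) - xs) - (x k - xs), F (x (k + 1)) - F (x k)⟫_ℝ) := by
      simp only [hEdef]
      linear_combination (-(a (k + 1))) * h2 + (2 * a (k + 1)) * h3 + (-2) * h45
    have hw1 : 0 ≤ a (k + 1) * ‖v (k + 1) - v k‖ ^ 2 :=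
      mul_nonneg (hapos _).le (sq_nonneg _)
    have hw2 : 0 ≤ (A k * A (k + 1))
        * ⟪(x (k + 1) - xs) - (x k - xs), F (x (k + 1)) - F (x k)⟫_ℝ :=
      mul_nonneg (mul_nonneg (hApos k).le (hApos (k + 1)).le) hcoc
    have hfin : a (k + 1) * (E (k + 1) - E k) ≤ a (k + 1) * (2 * δ k * ‖v (k + 1) - xs‖) := by
      nlinarith [mul_le_mul_of_nonneg_left hgb (by linarith [(hapos (k+1))] : (0:ℝ) ≤ 2 * a (k + 1))]
    have := le_of_mul_le_mul_left hfin (hapos (k + 1))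
    linarith
  -- sqrt recursion
  have hsqrt : ∀ k, Real.sqrt (E (k + 1)) ≤ Real.sqrt (E k) + 2 * δ k := by
    intro k
    apply sqrt_step _ _ _ (hEnn k) (hEnn (k + 1)) (hδ0 k)
    have h1 := hvE (k + 1)
    have h2 : (0:ℝ) ≤ 2 * δ k := by linarith [hδ0 k]
    nlinarith [hstepE k, mul_le_mul_of_nonneg_left h1 h2]
  set Δ : ℝ := ∑' j, δ j with hΔdef
  have hΔ0 : 0 ≤ Δ := tsum_nonneg hδ0
  have hpart : ∀ k, ∑ j ∈ Finset.range k, δ j ≤ Δ := fun k =>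
    Summable.sum_le_tsum _ (fun i _ => hδ0 i) hδ
  have hsB : ∀ k, Real.sqrt (E k) ≤ Real.sqrt (E 0) + 2 * Δ := by
    intro k
    have h : ∀ n, Real.sqrt (E n) ≤ Real.sqrt (E 0) + 2 * ∑ j ∈ Finset.range n, δ j := by
      intro n; induction n with
      | zero => simp
      | succ m ih =>
        calc Real.sqrt (E (m + 1)) ≤ Real.sqrt (E m) + 2 * δ m := hsqrt m
          _ ≤ Real.sqrt (E 0) + 2 * ∑ j ∈ Finset.range m, δ j + 2 * δ m := by linarith
          _ = Real.sqrt (E 0) + 2 * ∑ j ∈ Finset.range (m + 1), δ j := by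
              rw [Finset.sum_range_succ]; ring
    calc Real.sqrt (E k) ≤ Real.sqrt (E 0) + 2 * ∑ j ∈ Finset.range k, δ j := h k
      _ ≤ Real.sqrt (E 0) + 2 * Δ := by linarith [hpart k]
  set S : ℝ := Real.sqrt (E 0) + 2 * Δ with hSdef
  have hS0 : 0 ≤ S := by
    rw [hSdef]; have := Real.sqrt_nonneg (E 0); linarith
  have hvS : ∀ k, ‖v k - xs‖ ≤ S := fun k => le_trans (hvE k) (hsB k)
  -- conservation law
  have hw : ∀ k, A k • F (x k) + v k
      = A 0 • F (x 0) + v 0 - ∑ j ∈ Finset.range k, g j := by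
    intro k; induction k with
    | zero => simp
    | succ n ih =>
      have h := hx n
      have h2 : A (n + 1) • F (x (n + 1)) + v (n + 1)
          = (A n • F (x n) + v n) - g n := by
        rw [← sub_eq_zero]
        have h3 : (A (n + 1) • F (x (n + 1)) + v (n + 1)) - ((A n • F (x n) + v n) - g n)
            = A (n + 1) • F (x (n + 1)) - A n • F (x n) + v (n + 1) - v n + g n := by abel
        rw [h3, ← h]
      rw [h2, ih, Finset.sum_range_succ]; abel
  set C₁ : ℝ := ‖A 0 • F (x 0) + v 0 - xs‖ + Δ + S with hC₁def
  have hC₁0 : 0 ≤ C₁ := by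
    rw [hC₁def]; have := norm_nonneg (A 0 • F (x 0) + v 0 - xs); linarith
  have hWbound : ∀ k, A k * ‖F (x k)‖ ≤ C₁ := by
    intro k
    have h1 : A k • F (x k) = (A 0 • F (x 0) + v 0 - xs)
        - (∑ j ∈ Finset.range k, g j) - (v k - xs) := by
      calc A k • F (x k) = (A k • F (x k) + v k) - v k := by abel
        _ = (A 0 • F (x 0) + v 0 - ∑ j ∈ Finset.range k, g j) - v k := by rw [hw k]
        _ = _ := by abel
    have h2 : ‖∑ j ∈ Finset.range k, g j‖ ≤ Δ :=
      le_trans (norm_sum_le _ _) (le_trans (Finset.sum_le_sum fun i _ => hg i) (hpart k))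
    have h3 : ‖A k • F (x k)‖ ≤ C₁ := by
      rw [h1, hC₁def]
      refine le_trans (norm_sub_le _ _) ?_
      refine add_le_add (le_trans (norm_sub_le _ _) ?_) (hvS k)
      exact add_le_add le_rfl h2
    rwa [norm_smul, Real.norm_eq_abs, abs_of_pos (hApos k)] at h3
  -- bound on x
  have hXsum : ∀ k, A k • (x k - xs) = ∑ j ∈ Finset.range (k + 1), a j • (v j - xs) := by
    intro k; induction k with
    | zero => simp [hv0', hA0]
    | succ n ih =>
      rw [Finset.sum_range_succ, ← ih, hvrel n]; abel
  have hAsum : ∀ k, ∑ j ∈ Finset.range (k + 1), a j = A k := by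
    intro k; induction k with
    | zero => simp [hA0]
    | succ n ih => rw [Finset.sum_range_succ, ih, hA n]; ring
  have hxB : ∀ k, ‖x k - xs‖ ≤ S := by
    intro k
    have h1 : ‖A k • (x k - xs)‖ ≤ A k * S := by
      rw [hXsum k]
      calc ‖∑ j ∈ Finset.range (k + 1), a j • (v j - xs)‖
          ≤ ∑ j ∈ Finset.range (k + 1), ‖a j • (v j - xs)‖ := norm_sum_le _ _
        _ ≤ ∑ j ∈ Finset.range (k + 1), a j * S := by
            refine Finset.sum_le_sum fun i _ => ?_
            rw [norm_smul, Real.norm_eq_abs, abs_of_pos (hapos i)]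
            exact mul_le_mul_of_nonneg_left (hvS i) (hapos i).le
        _ = (∑ j ∈ Finset.range (k + 1), a j) * S := by rw [Finset.sum_mul]
        _ = A k * S := by rw [hAsum k]
    rw [norm_smul, Real.norm_eq_abs, abs_of_pos (hApos k)] at h1
    exact le_of_mul_le_mul_left h1 (hApos k)
  -- Gap bound
  set K : ℝ := S + ‖x 0 - xs‖ + D with hKdef
  have hK0 : 0 ≤ K := by
    rw [hKdef]; have := norm_nonneg (x 0 - xs); linarith
  have hGapB : ∀ k, Gap (x k) ≤ K * ‖F (x k)‖ := by
    intro k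
    rw [hGap (x k)]
    haveI : Nonempty (Metric.closedBall (x 0) D) :=
      ⟨⟨x 0, Metric.mem_closedBall_self hD.le⟩⟩
    apply ciSup_le
    rintro ⟨y, hy⟩
    rw [Metric.mem_closedBall, dist_eq_norm] at hy
    have hmono : 0 ≤ ⟪F (x k) - F y, x k - y⟫_ℝ :=
      le_trans (mul_nonneg hlam.le (sq_nonneg _)) (hF (x k) y)
    have hsplit : ⟪x k - y, F y⟫_ℝ
        = ⟪x k - y, F (x k)⟫_ℝ - ⟪F (x k) - F y, x k - y⟫_ℝ := by
      have c1 : ⟪F (x k) - F y, x k - y⟫_ℝ = ⟪x k - y, F (x k) - F y⟫_ℝ :=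
        real_inner_comm _ _
      rw [c1, inner_sub_right]
      ring
    have hip : ⟪x k - y, F (x k)⟫_ℝ ≤ ‖x k - y‖ * ‖F (x k)‖ := real_inner_le_norm _ _
    have hdist : ‖x k - y‖ ≤ K := by
      rw [show x k - y = (x k - xs) + (xs - x 0) + (x 0 - y) from by abel, hKdef]
      refine le_trans (norm_add₃_le) ?_
      have e1 : ‖xs - x 0‖ = ‖x 0 - xs‖ := norm_sub_rev _ _
      have e2 : ‖x 0 - y‖ = ‖y - x 0‖ := norm_sub_rev _ _
      have := hxB k
      rw [e1, e2]
      gcongr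
    have hfin : ⟪x k - y, F y⟫_ℝ ≤ K * ‖F (x k)‖ := by
      calc ⟪x k - y, F y⟫_ℝ ≤ ⟪x k - y, F (x k)⟫_ℝ := by rw [hsplit]; linarith
        _ ≤ ‖x k - y‖ * ‖F (x k)‖ := hip
        _ ≤ K * ‖F (x k)‖ := mul_le_mul_of_nonneg_right hdist (norm_nonneg _)
    exact hfin
  refine ⟨(K + 1) * (C₁ + 1), mul_pos (by linarith) (by linarith), fun k => ⟨?_, ?_⟩⟩
  · calc A (k + 1) * ‖F (x (k + 1))‖ ≤ C₁ := hWbound (k + 1)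
      _ ≤ (K + 1) * (C₁ + 1) := by nlinarith
  · calc A (k + 1) * Gap (x (k + 1))
        ≤ A (k + 1) * (K * ‖F (x (k + 1))‖) :=
          mul_le_mul_of_nonneg_left (hGapB (k + 1)) (hApos (k + 1)).le
      _ = K * (A (k + 1) * ‖F (x (k + 1))‖) := by ring
      _ ≤ K * C₁ := mul_le_mul_of_nonneg_left (hWbound (k + 1)) hK0
      _ ≤ (K + 1) * (C₁ + 1) := by nlinarith
end

section
/- Let F : H → H be a map and let (z_k), (x_k) be sequences in H with x_k + F(x_k) = z_k for all k ≥ 0 (so x_k = J_F(z_k) = (I + F)^{-1}(z_k)) and z_{k+1} = (1/(k+2)) z₀ + ((k+1)/(k+2)) (z_k − F(x_k)) for all k ≥ 0 (the Halpern iteration with nonexpansive map N = J_F, since N(z_k) = z_k − F(x_k)). Define x_{−1} := x₀, A_k := k+1, v_k := (A_k x_k − A_{k−1} x_{k−1}) for k ≥ 0 with A_{−1} := 0 (so v₀ = x₀, matching the Contracting PPA with a_k ≡ 1). Then A₀ F(x₀) + v₀ = z₀, and (x_k) satisfies the exact Contracting PPA recursion: 0 = A_{k+1} F(x_{k+1})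 − A_k F(x_k) + v_{k+1} − v_k for all k ≥ 0. -/
open Filter Topology
open scoped InnerProductSpace

/-- The Halpern iteration `z_{k+1} = (1/(k+2)) z₀ + ((k+1)/(k+2)) N z_k`
with `N = J_F` (so `x_k = J_F(z_k)`, i.e. `x_k + F(x_k) = z_k`, and
`N z_k = z_k − F(x_k)`) satisfies, with `A_k = k+1`, `v₀ = x₀`,
`v_{k+1} = A_{k+1} x_{k+1} − A_k x_k`: `A₀ F(x₀) + v₀ = z₀` and the exact Contracting PPA
recursion `0 = A_{k+1} F(x_{k+1}) − A_k F(x_k) + v_{k+1} − v_k` for all `k`. -/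
theorem halpern_equiv_contracting_ppa
    {H : Type*} [NormedAddCommGroup H] [InnerProductSpace ℝ H] [CompleteSpace H]
    (F : H → H) (z x : ℕ → H)
    (hres : ∀ k, x k + F (x k) = z k)
    (hz : ∀ k, z (k + 1) =
      (1 / ((k : ℝ) + 2)) • z 0 + (((k : ℝ) + 1) / ((k : ℝ) + 2)) • (z k - F (x k)))
    (v : ℕ → H) (hv0 : v 0 = x 0)
    (hv : ∀ k, v (k + 1) = ((k : ℝ) + 2) • x (k + 1) - ((k : ℝ) + 1) • x k) :
    (1 : ℝ) • F (x 0) + v 0 = z 0 ∧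
    ∀ k : ℕ, (0 : H) =
      ((k : ℝ) + 2) • F (x (k + 1)) - ((k : ℝ) + 1) • F (x k) + v (k + 1) - v k := by
  have key : ∀ k : ℕ, ((k : ℝ) + 1) • F (x k) + v k = z 0 := by
    intro k
    induction k with
    | zero => simpa [hv0, add_comm] using hres 0
    | succ k ih =>
      have h2 : ((k : ℝ) + 2) ≠ 0 := by positivity
      have hz' : ((k : ℝ) + 2) • z (k + 1) = z 0 + ((k : ℝ) + 1) • (z k - F (x k)) := by
        rw [hz k]
        match_scalars <;> field_simp
      rw [hv k]
      push_cast
      linear_combination (norm := module)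
        ((k : ℝ) + 2) • hres (k + 1) - ((k : ℝ) + 1) • hres k + hz'
  constructor
  · simpa using key 0
  · intro k
    have h1 := key (k + 1)
    have h2 := key k
    push_cast at h1
    linear_combination (norm := module) h2 - h1
end

section
/- Let μ ∈ [0,1), p ≥ 1, and 0 < a ≤ (1−μ)/p. Define τ_k = 1/(a k + 1) for k ≥ 0 and let τ_{−1} ∈ (0,1]. Then for every k ≥ 0 one has τ_k ∈ (0,1] and (1 − τ_k)/τ_k^p ≤ 1/τ_{k−1}^p − μ/τ_k^{p−1}. -/
open Filter Topology

/-- Key inequality: for `1 ≤ y ≤ x` and `1 ≤ p`, `x^p - y^p ≤ p * (x - y) * x^(p-1)`. -/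
lemma rpow_sub_rpow_le (x y p : ℝ) (hy : 0 < y) (hxy : y ≤ x) (hp : 1 ≤ p) :
    x ^ p - y ^ p ≤ p * (x - y) * x ^ (p - 1) := by
  have hx : 0 < x := lt_of_lt_of_le hy hxy
  have hs : -1 ≤ y / x - 1 := by
    have : 0 ≤ y / x := by positivity
    linarith
  have hB := one_add_mul_self_le_rpow_one_add hs hp
  rw [add_sub_cancel] at hB
  have hdiv : (y / x) ^ p = y ^ p / x ^ p := Real.div_rpow hy.le hx.le p
  rw [hdiv] at hB
  have hxp : (0:ℝ) < x ^ p := Real.rpow_pos_of_pos hx p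
  have hxp1 : x ^ (p - 1) = x ^ p / x := by
    rw [Real.rpow_sub hx, Real.rpow_one]
  rw [hxp1]
  rw [le_div_iff₀ hxp] at hB
  have e : (1 + p * (y / x - 1)) * x ^ p = x ^ p - p * (x - y) * (x ^ p / x) := by
    field_simp; ring
  rw [e] at hB
  linarith

/-- For `μ ∈ [0,1)`, `p ≥ 1`, `0 < a ≤ (1−μ)/p`, `τ_k = 1/(ak+1)` and
`τ_{−1} ∈ (0,1]`, one has `τ_k ∈ (0,1]` and
`(1 − τ_k)/τ_k^p ≤ 1/τ_{k−1}^p − μ/τ_k^{p−1}` for all `k ≥ 0`. -/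
theorem tau_sequence_property
    (μ p a : ℝ) (hμ0 : 0 ≤ μ) (hμ1 : μ < 1) (hp : 1 ≤ p)
    (ha0 : 0 < a) (ha : a ≤ (1 - μ) / p)
    (τneg : ℝ) (hτneg0 : 0 < τneg) (hτneg1 : τneg ≤ 1)
    (τ : ℕ → ℝ) (hτ : ∀ k : ℕ, τ k = 1 / (a * (k : ℝ) + 1)) :
    ∀ k : ℕ, (0 < τ k ∧ τ k ≤ 1) ∧
      (1 - τ k) / τ k ^ p ≤
        1 / (match k with | 0 => τneg | (m + 1) => τ m) ^ p - μ / τ k ^ (p - 1) := by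
  have hp0 : (0:ℝ) < p := lt_of_lt_of_le one_pos hp
  have hpa : p * a ≤ 1 - μ := by
    rw [← le_div_iff₀' hp0]; exact ha
  intro k
  have hden : ∀ m : ℕ, (0:ℝ) < a * m + 1 := fun m => by positivity
  have hτpos : ∀ m : ℕ, 0 < τ m := fun m => by
    rw [hτ]; positivity
  have hτle : ∀ m : ℕ, τ m ≤ 1 := fun m => by
    rw [hτ]
    rw [div_le_one (hden m)]
    have : (0:ℝ) ≤ a * m := by positivity
    linarith
  refine ⟨⟨hτpos k, hτle k⟩, ?_⟩
  match k with
  | 0 =>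
    have hτ0 : τ 0 = 1 := by rw [hτ]; norm_num
    simp only [hτ0, Real.one_rpow]
    have hτnegp : τneg ^ p ≤ 1 := by
      calc τneg ^ p ≤ 1 ^ p := Real.rpow_le_rpow hτneg0.le hτneg1 hp0.le
      _ = 1 := Real.one_rpow p
    have hτnegp0 : (0:ℝ) < τneg ^ p := Real.rpow_pos_of_pos hτneg0 p
    have : (1:ℝ) ≤ 1 / τneg ^ p := by
      rw [le_div_iff₀ hτnegp0]; linarith
    simp only [sub_self, zero_div, div_one]
    linarith
  | m + 1 =>
    set x : ℝ := a * ((m:ℝ) + 1) + 1 with hxdef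
    set y : ℝ := a * (m:ℝ) + 1 with hydef
    have hy : (0:ℝ) < y := by positivity
    have hx : (0:ℝ) < x := by positivity
    have hxy : y ≤ x := by rw [hxdef, hydef]; nlinarith
    have hsub : x - y = a := by ring
    have hτk : τ (m + 1) = 1 / x := by rw [hτ]; push_cast; ring_nf; rw [hxdef]; ring
    have hτm : τ m = 1 / y := by rw [hτ]
    have hxp : (0:ℝ) < x ^ p := Real.rpow_pos_of_pos hx p
    have hxp1 : (0:ℝ) < x ^ (p - 1) := Real.rpow_pos_of_pos hx (p - 1)
    have hyp : (0:ℝ) < y ^ p := Real.rpow_pos_of_pos hy p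
    have hkey : x ^ p - y ^ p ≤ p * a * x ^ (p - 1) := by
      have := rpow_sub_rpow_le x y p hy hxy hp
      rw [hsub] at this; exact this
    have hmatch : (match m + 1 with | 0 => τneg | (n + 1) => τ n) = τ m := rfl
    rw [hmatch, hτk, hτm]
    have h1 : (1/x) ^ p = (x ^ p)⁻¹ := by
      rw [one_div, Real.inv_rpow hx.le]
    have h2 : (1/y) ^ p = (y ^ p)⁻¹ := by
      rw [one_div, Real.inv_rpow hy.le]
    have h3 : (1/x) ^ (p-1) = (x ^ (p-1))⁻¹ := by
      rw [one_div, Real.inv_rpow hx.le]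
    rw [h1, h2, h3]
    have hxp1x : x ^ p = x ^ (p - 1) * x := by
      rw [← Real.rpow_add_one hx.ne' (p-1)]; ring_nf
    have hLHS : (1 - 1/x) / (x ^ p)⁻¹ = x ^ p - x ^ (p - 1) := by
      rw [div_eq_mul_inv, inv_inv]
      field_simp
      rw [hxp1x]; ring
    rw [hLHS, one_div (y ^ p)⁻¹, inv_inv, div_eq_mul_inv μ, inv_inv]
    -- goal: x^p - x^(p-1) ≤ y^p - x^(p-1) * μ
    have hμterm : p * a * x ^ (p-1) ≤ (1 - μ) * x ^ (p-1) := by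
      apply mul_le_mul_of_nonneg_right hpa hxp1.le
    nlinarith [hkey, hμterm]
end

section
/- Let (x_k) be generated by the inexact Sublinear Contracting PPA recursion for the λ-cocoercive operator F, and suppose F(x_*) = 0. Then there exists a constant C > 0 such that for all k ≥ 0: ‖F(x_{k+1})‖ ≤ C τ_k^p and Gap(x_{k+1}) ≤ C τ_k^p; in particular ‖F(x_{k+1})‖ = O(1/k^p) and Gap(x_{k+1}) = O(1/k^p). -/
open Filter Topology
open scoped InnerProductSpace

lemma core_identity {H : Type*} [NormedAddCommGroup H] [InnerProductSpace ℝ H]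
    (u u' X Fk Fk' gk : H) (τ θ β : ℝ)
    (hrec : θ • Fk' - ((1 - τ) * θ) • Fk + (u' - u) + (β * τ) • (u' - X) + gk = 0) :
    (1/2) * ‖u'‖ ^ 2 + θ * ⟪Fk', τ • u' + (1 - τ) • X⟫_ℝ + (β / 2) * ‖τ • u' + (1 - τ) • X‖ ^ 2
      + (1 - τ) * θ * ⟪Fk' - Fk, u' - X⟫_ℝ + β * τ * (1 - τ / 2) * ‖u' - X‖ ^ 2
      + ⟪gk, u'⟫_ℝ + (1/2) * ‖u' - u‖ ^ 2
    = (1/2) * ‖u‖ ^ 2 + (1 - τ) * θ * ⟪Fk, X⟫_ℝ + (β / 2) * ‖X‖ ^ 2 := by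
  have hu : u = θ • Fk' - ((1 - τ) * θ) • Fk + u' + (β * τ) • (u' - X) + gk := by
    linear_combination (norm := module) -hrec
  subst hu
  simp only [← real_inner_self_eq_norm_sq, inner_sub_left, inner_sub_right, inner_add_left,
    inner_add_right, real_inner_smul_left, real_inner_smul_right]
  simp only [real_inner_comm Fk Fk', real_inner_comm u' Fk', real_inner_comm X Fk',
    real_inner_comm gk Fk', real_inner_comm u' Fk, real_inner_comm X Fk, real_inner_comm gk Fk,
    real_inner_comm X u', real_inner_comm gk u', real_inner_comm gk X]
  ring

lemma sq_le_imp_le {y K : ℝ} (h : y^2 ≤ K^2) (hy : 0 ≤ y) (hK : 0 ≤ K) : y ≤ K := by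
  nlinarith

lemma bern_aux {p a M : ℝ} (hp : 1 ≤ p) (ha : 0 < a) (hap : a * p ≤ 1) (hM : 1 ≤ M) :
    (M + a - 1) * (M + a) ^ (p - 1) ≤ M ^ p := by
  set N := M + a with hN
  have hN1 : 1 < N := by simp [hN]; nlinarith
  have hN0 : (0:ℝ) < N := by linarith
  have hq : (0:ℝ) ≤ 1 - a / N := by
    rw [sub_nonneg, div_le_one hN0]; simp [hN]; linarith
  have key : 1 - p * (a / N) ≤ (1 - a / N) ^ p := by
    have := one_add_mul_self_le_rpow_one_add (s := -(a / N)) (by linarith [hq] : (-1:ℝ) ≤ -(a/N)) hp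
    simpa [sub_eq_add_neg, mul_neg] using this
  have hMp : M ^ p = N ^ p * (1 - a / N) ^ p := by
    rw [← Real.mul_rpow hN0.le hq]
    congr 1
    rw [hN]; field_simp; ring
  have hsplit : N ^ p = N ^ (p - 1) * N := by
    rw [← Real.rpow_add_one hN0.ne' (p - 1)]; ring_nf
  have hNp1 : (0:ℝ) ≤ N ^ (p - 1) := Real.rpow_nonneg hN0.le _
  have hNpos : (0:ℝ) < N ^ p := Real.rpow_pos_of_pos hN0 _
  have h2 : N ^ p * (1 - p * (a / N)) ≤ M ^ p := by
    rw [hMp]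
    exact mul_le_mul_of_nonneg_left key hNpos.le
  calc (N - 1) * N ^ (p - 1) ≤ (N - a * p) * N ^ (p - 1) := by nlinarith
    _ = N ^ p * (1 - p * (a / N)) := by rw [hsplit]; field_simp
    _ ≤ M ^ p := h2

set_option maxHeartbeats 1000000 in
/-- Sublinear convergence rates of the inexact Sublinear Contracting PPA
applied to a λ-cocoercive operator `F` with `F x_* = 0`:
there is `C > 0` with `‖F(x_{k+1})‖ ≤ C τ_k^p` and `Gap(x_{k+1}) ≤ C τ_k^p`. -/
theorem sublinear_contracting_ppa_rates
    {H : Type*} [NormedAddCommGroup H] [InnerProductSpace ℝ H] [CompleteSpace H]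
    (lam : ℝ) (hlam : 0 < lam) (F : H → H)
    (hF : ∀ x y : H, lam * ‖F x - F y‖ ^ 2 ≤ ⟪F x - F y, x - y⟫_ℝ)
    (x₀' : H) (D : ℝ) (hD : 0 < D)
    (Gap : H → ℝ)
    (hGap : ∀ z : H, Gap z = ⨆ y : Metric.closedBall x₀' D, ⟪z - (y : H), F (y : H)⟫_ℝ)
    (μ p a : ℝ) (hμ0 : 0 ≤ μ) (hμ1 : μ < 1) (hp : 1 ≤ p)
    (ha0 : 0 < a) (ha : a ≤ (1 - μ) / p)
    (τ : ℕ → ℝ) (hτ : ∀ k : ℕ, τ k = 1 / (a * (k : ℝ) + 1))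
    (τneg : ℝ) (hτneg0 : 0 < τneg) (hτneg1 : τneg ≤ 1)
    (x : ℕ → H)
    (v : ℕ → H)
    (hv0 : v 0 = (1 / τneg) • x 0 - ((1 - τneg) / τneg) • x 0)
    (hv : ∀ k, v (k + 1) = (1 / τ k) • x (k + 1) - ((1 - τ k) / τ k) • x k)
    (β : ℝ) (hβ : 0 ≤ β)
    (δ : ℕ → ℝ) (hδ0 : ∀ k, 0 ≤ δ k) (hδ : Summable δ)
    (g : ℕ → H) (hg : ∀ k, ‖g k‖ ≤ δ k)
    (hx : ∀ k, (0 : H) = (1 / τ k ^ p) • F (x (k + 1)) -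
      ((1 - τ k) / τ k ^ p) • F (x k) + (v (k + 1) - v k) +
      β • (x (k + 1) - x k) + g k)
    (xs : H) (hxs : F xs = 0) :
    ∃ C : ℝ, 0 < C ∧ ∀ k,
      ‖F (x (k + 1))‖ ≤ C * τ k ^ p ∧ Gap (x (k + 1)) ≤ C * τ k ^ p := by
  have hp0 : (0:ℝ) < p := lt_of_lt_of_le one_pos hp
  have hap : a * p ≤ 1 := by
    have h1 : a * p ≤ 1 - μ := by
      rw [div_eq_mul_inv] at ha
      calc a * p ≤ ((1-μ) * p⁻¹) * p := by nlinarith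
        _ = 1 - μ := by field_simp
    linarith
  have ha1 : a ≤ 1 := by nlinarith
  -- basic facts about τ
  have hNpos : ∀ k : ℕ, (0:ℝ) < a * k + 1 := fun k => by positivity
  have hN1 : ∀ k : ℕ, (1:ℝ) ≤ a * k + 1 := fun k => by
    have : (0:ℝ) ≤ a * k := by positivity
    linarith
  have hτpos : ∀ k, 0 < τ k := fun k => by rw [hτ k]; positivity
  have hτle1 : ∀ k, τ k ≤ 1 := fun k => by
    rw [hτ k]; rw [div_le_one (hNpos k)]; linarith [hN1 k]
  have hτ0 : τ 0 = 1 := by rw [hτ 0]; norm_num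
  have hτp_pos : ∀ k, 0 < τ k ^ p := fun k => Real.rpow_pos_of_pos (hτpos k) p
  have hτp_eq : ∀ k, τ k ^ p = ((a * k + 1 : ℝ) ^ p)⁻¹ := fun k => by
    rw [hτ k, one_div, Real.inv_rpow (hNpos k).le]
  -- Bernoulli consequence
  have hmain : ∀ k, (1 - τ (k+1)) * (1 / τ (k+1) ^ p) ≤ 1 / τ k ^ p := by
    intro k
    have hb := bern_aux (M := a * k + 1) hp ha0 hap (hN1 k)
    have hNk1 : (a * ((k:ℝ)+1) + 1) = (a * k + 1) + a := by ring
    rw [hτp_eq k, hτp_eq (k+1), one_div, inv_inv, one_div, inv_inv]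
    push_cast
    rw [hNk1]
    have h1τ : 1 - τ (k+1) = ((a * k + 1) + a - 1) / ((a * k + 1) + a) := by
      rw [hτ (k+1)]
      push_cast
      rw [hNk1]
      field_simp
    rw [h1τ]
    have hpos : (0:ℝ) < (a * k + 1) + a := by positivity
    have hsplit : ((a * ↑k + 1) + a) ^ p = ((a * ↑k + 1) + a) ^ (p-1) * ((a * ↑k + 1) + a) := by
      rw [← Real.rpow_add_one hpos.ne' (p - 1)]; ring_nf
    calc ((a * ↑k + 1) + a - 1) / ((a * ↑k + 1) + a) * ((a * ↑k + 1) + a) ^ p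
        = ((a * ↑k + 1) + a - 1) * ((a * ↑k + 1) + a) ^ (p-1) := by
          rw [hsplit]; field_simp
      _ ≤ (a * ↑k + 1) ^ p := hb
  -- the A coefficients
  set A : ℕ → ℝ := fun k => Nat.casesOn k (0:ℝ) (fun n => 1 / τ n ^ p) with hAdef
  have hA0 : A 0 = 0 := rfl
  have hAs : ∀ k, A (k+1) = 1 / τ k ^ p := fun k => rfl
  have hAnonneg : ∀ k, 0 ≤ A k := by
    intro k
    cases k with
    | zero => simp [hA0]
    | succ n => rw [hAs n]; exact (div_pos one_pos (hτp_pos n)).le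
  -- nonnegativity of inner products with F
  clear_value A
  have hss : ∀ k : ℕ, lam * ‖F (x k)‖^2 ≤ ⟪F (x k), x k - xs⟫_ℝ := by
    intro k
    have h0 := hF (x k) xs
    rwa [hxs, sub_zero] at h0
  have hssnn : ∀ k : ℕ, 0 ≤ ⟪F (x k), x k - xs⟫_ℝ := by
    intro k
    exact le_trans (mul_nonneg hlam.le (sq_nonneg _)) (hss k)
  -- geometric relations
  have hΔ : ∀ k, x (k+1) - x k = τ k • ((v (k+1) - xs) - (x k - xs)) := by
    intro k
    have hτne : τ k ≠ 0 := (hτpos k).ne'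
    rw [hv k]
    match_scalars <;> field_simp <;> ring
  have hXk1 : ∀ k, x (k+1) - xs = τ k • (v (k+1) - xs) + (1 - τ k) • (x k - xs) := by
    intro k
    linear_combination (norm := module) hΔ k
  -- per-step Lyapunov inequality
  have step1 : ∀ k, (1 / τ k ^ p) * ⟪F (x (k+1)), x (k+1) - xs⟫_ℝ
      + (1/2) * ‖v (k+1) - xs‖^2 + (β/2) * ‖x (k+1) - xs‖^2
      ≤ (1 - τ k) * (1 / τ k ^ p) * ⟪F (x k), x k - xs⟫_ℝ
      + (1/2) * ‖v k - xs‖^2 + (β/2) * ‖x k - xs‖^2 + δ k * ‖v (k+1) - xs‖ := by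
    intro k
    have hτk := hτpos k
    have hτk1 := hτle1 k
    have htp := hτp_pos k
    have h0 := hx k
    rw [hΔ k] at h0
    have hrec : (1 / τ k ^ p) • F (x (k+1)) - ((1 - τ k) * (1 / τ k ^ p)) • F (x k)
        + ((v (k+1) - xs) - (v k - xs)) + (β * τ k) • ((v (k+1) - xs) - (x k - xs)) + g k = 0 := by
      linear_combination (norm := module) -h0
    have hid := core_identity (v k - xs) (v (k+1) - xs) (x k - xs) (F (x k)) (F (x (k+1)))
      (g k) (τ k) (1 / τ k ^ p) β hrec
    rw [← hXk1 k] at hid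
    have hb1 : 0 ≤ (1 - τ k) * (1 / τ k ^ p)
        * ⟪F (x (k+1)) - F (x k), (v (k+1) - xs) - (x k - xs)⟫_ℝ := by
      have hco := hF (x (k+1)) (x k)
      have hinner : ⟪F (x (k+1)) - F (x k), x (k+1) - x k⟫_ℝ
          = τ k * ⟪F (x (k+1)) - F (x k), (v (k+1) - xs) - (x k - xs)⟫_ℝ := by
        rw [hΔ k, real_inner_smul_right]
      have h1 : 0 ≤ ⟪F (x (k+1)) - F (x k), x (k+1) - x k⟫_ℝ :=
        le_trans (mul_nonneg hlam.le (sq_nonneg _)) hco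
      rw [hinner] at h1
      have h2 : 0 ≤ ⟪F (x (k+1)) - F (x k), (v (k+1) - xs) - (x k - xs)⟫_ℝ :=
        nonneg_of_mul_nonneg_right h1 hτk
      have h3 : 0 ≤ (1 - τ k) * (1 / τ k ^ p) :=
        mul_nonneg (by linarith) (le_of_lt (div_pos one_pos htp))
      exact mul_nonneg h3 h2
    have hb2 : 0 ≤ β * τ k * (1 - τ k / 2) * ‖(v (k+1) - xs) - (x k - xs)‖^2 := by
      apply mul_nonneg
      apply mul_nonneg (mul_nonneg hβ hτk.le) (by linarith)
      positivity
    have hb3 : -(δ k * ‖v (k+1) - xs‖) ≤ ⟪g k, v (k+1) - xs⟫_ℝ := by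
      have h1 := abs_real_inner_le_norm (g k) (v (k+1) - xs)
      have h2 : ‖g k‖ * ‖v (k+1) - xs‖ ≤ δ k * ‖v (k+1) - xs‖ :=
        mul_le_mul_of_nonneg_right (hg k) (norm_nonneg _)
      have h3 := neg_abs_le ⟪g k, v (k+1) - xs⟫_ℝ
      linarith
    have hb4 : 0 ≤ (1/2 : ℝ) * ‖(v (k+1) - xs) - (v k - xs)‖^2 := by positivity
    linarith
  -- the Lyapunov function
  set V : ℕ → ℝ := fun k => A k * ⟪F (x k), x k - xs⟫_ℝ
    + (1/2) * ‖v k - xs‖^2 + (β/2) * ‖x k - xs‖^2 with hVdef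
  clear_value V
  have step2 : ∀ k, V (k+1) ≤ V k + δ k * ‖v (k+1) - xs‖ := by
    intro k
    have hcoef : (1 - τ k) * (1 / τ k ^ p) * ⟪F (x k), x k - xs⟫_ℝ
        ≤ A k * ⟪F (x k), x k - xs⟫_ℝ := by
      cases k with
      | zero => rw [hA0, hτ0]; ring_nf; simp
      | succ n =>
          rw [hAs n]
          exact mul_le_mul_of_nonneg_right (hmain n) (hssnn (n+1))
    have h1 := step1 k
    simp only [hVdef, hAs k]
    linarith
  have chain : ∀ k, V k ≤ V 0 + ∑ j ∈ Finset.range k, δ j * ‖v (j+1) - xs‖ := by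
    intro k
    induction k with
    | zero => simp
    | succ n ih =>
      rw [Finset.sum_range_succ]
      have := step2 n
      linarith
  -- Gronwall bound on r
  set S : ℝ := ∑' j, δ j with hSdef
  have hS0 : 0 ≤ S := tsum_nonneg hδ0
  have hpart : ∀ k : ℕ, ∑ j ∈ Finset.range k, δ j ≤ S :=
    fun k => hδ.sum_le_tsum _ (fun i _ => hδ0 i)
  clear_value S
  have hV0 : 0 ≤ V 0 := by
    simp only [hVdef, hA0, zero_mul, zero_add]
    have h1 : 0 ≤ (1/2 : ℝ) * ‖v 0 - xs‖^2 := by positivity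
    have h2 : 0 ≤ (β/2) * ‖x 0 - xs‖^2 := mul_nonneg (by linarith) (sq_nonneg _)
    linarith
  have hVlb : ∀ k, (1/2) * ‖v k - xs‖^2 ≤ V k := by
    intro k
    simp only [hVdef]
    have h1 : 0 ≤ A k * ⟪F (x k), x k - xs⟫_ℝ := mul_nonneg (hAnonneg k) (hssnn k)
    have h2 : 0 ≤ (β/2) * ‖x k - xs‖^2 := by positivity
    linarith
  set R0 : ℝ := S + Real.sqrt (S^2 + 2 * V 0) with hR0def
  clear_value R0
  have hR0 : ∀ k, ‖v (k+1) - xs‖ ≤ R0 := by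
    intro k
    induction k using Nat.strong_induction_on with
    | _ k ih =>
      by_cases hcase : ‖v (k+1) - xs‖ ≤ R0
      · exact hcase
      push_neg at hcase
      have hub : ∀ j ∈ Finset.range (k+1), δ j * ‖v (j+1) - xs‖ ≤ δ j * ‖v (k+1) - xs‖ := by
        intro j hj
        rcases lt_or_eq_of_le (Nat.lt_succ_iff.mp (Finset.mem_range.mp hj)) with h | h
        · exact mul_le_mul_of_nonneg_left (le_trans (ih j h) hcase.le) (hδ0 j)
        · rw [h]
      have h1 : (1/2) * ‖v (k+1) - xs‖^2 ≤ V 0 + (∑ j ∈ Finset.range (k+1), δ j) * ‖v (k+1) - xs‖ := by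
        calc (1/2) * ‖v (k+1) - xs‖^2 ≤ V (k+1) := hVlb (k+1)
          _ ≤ V 0 + ∑ j ∈ Finset.range (k+1), δ j * ‖v (j+1) - xs‖ := chain (k+1)
          _ ≤ V 0 + ∑ j ∈ Finset.range (k+1), δ j * ‖v (k+1) - xs‖ := by
              have := Finset.sum_le_sum hub
              linarith
          _ = V 0 + (∑ j ∈ Finset.range (k+1), δ j) * ‖v (k+1) - xs‖ := by
              rw [Finset.sum_mul]
      have h2 : (1/2) * ‖v (k+1) - xs‖^2 ≤ V 0 + S * ‖v (k+1) - xs‖ := by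
        have := mul_le_mul_of_nonneg_right (hpart (k+1)) (norm_nonneg (v (k+1) - xs))
        linarith
      have h3 : (‖v (k+1) - xs‖ - S)^2 ≤ S^2 + 2 * V 0 := by
        have hexp : (‖v (k+1) - xs‖ - S)^2
            = ‖v (k+1) - xs‖^2 - 2 * S * ‖v (k+1) - xs‖ + S^2 := by ring
        rw [hexp]
        linarith
      have h4 : ‖v (k+1) - xs‖ - S ≤ Real.sqrt (S^2 + 2 * V 0) := by
        calc ‖v (k+1) - xs‖ - S ≤ |‖v (k+1) - xs‖ - S| := le_abs_self _
          _ = Real.sqrt ((‖v (k+1) - xs‖ - S)^2) := (Real.sqrt_sq_eq_abs _).symm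
          _ ≤ Real.sqrt (S^2 + 2 * V 0) := Real.sqrt_le_sqrt h3
      rw [hR0def] at hcase
      linarith
  set R : ℝ := max (‖v 0 - xs‖) R0 with hRdef
  have hR : ∀ k, ‖v k - xs‖ ≤ R := by
    intro k
    cases k with
    | zero => exact le_max_left _ _
    | succ n => exact le_trans (hR0 n) (le_max_right _ _)
  have hRnn : 0 ≤ R := le_trans (norm_nonneg _) (hR 0)
  -- bound on ‖x k - xs‖
  set XB : ℝ := max (‖x 0 - xs‖) R with hXBdef
  have hXBnn : 0 ≤ XB := le_trans (norm_nonneg _) (le_max_left _ _)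
  have hRXB : R ≤ XB := le_max_right _ _
  clear_value R XB
  have hXB : ∀ k, ‖x k - xs‖ ≤ XB := by
    intro k
    induction k with
    | zero => rw [hXBdef]; exact le_max_left _ _
    | succ n ih =>
      have hτn := hτpos n
      have hτn1 := hτle1 n
      calc ‖x (n+1) - xs‖ = ‖τ n • (v (n+1) - xs) + (1 - τ n) • (x n - xs)‖ := by
            rw [hXk1 n]
        _ ≤ ‖τ n • (v (n+1) - xs)‖ + ‖(1 - τ n) • (x n - xs)‖ := norm_add_le _ _
        _ = τ n * ‖v (n+1) - xs‖ + (1 - τ n) * ‖x n - xs‖ := by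
            rw [norm_smul, norm_smul, Real.norm_eq_abs, Real.norm_eq_abs,
              abs_of_nonneg hτn.le, abs_of_nonneg (by linarith)]
        _ ≤ τ n * R + (1 - τ n) * XB := by
            have h1 := mul_le_mul_of_nonneg_left (hR (n+1)) hτn.le
            have h2 := mul_le_mul_of_nonneg_left ih (by linarith : (0:ℝ) ≤ 1 - τ n)
            linarith
        _ ≤ XB := by
            have h3 := mul_le_mul_of_nonneg_left hRXB hτn.le
            linarith
  -- stage 2 : the anchor sequence z
  set z : ℕ → H := fun k => A k • F (x k) + v k + β • x k with hzdef
  clear_value z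
  have hz_step : ∀ k, z (k+1) = z k - (A k - (1 - τ k) * (1 / τ k ^ p)) • F (x k) - g k := by
    intro k
    have h0 := hx k
    simp only [hzdef, hAs k]
    linear_combination (norm := module) -h0
  have hε0 : ∀ k, 0 ≤ A k - (1 - τ k) * (1 / τ k ^ p) := by
    intro k
    cases k with
    | zero => rw [hA0, hτ0]; ring_nf; simp
    | succ n => rw [hAs n]; have := hmain n; linarith
  have hεA : ∀ k, A k - (1 - τ k) * (1 / τ k ^ p) ≤ A k := by
    intro k
    have h3 : 0 ≤ (1 - τ k) * (1 / τ k ^ p) :=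
      mul_nonneg (by linarith [hτle1 k]) (le_of_lt (div_pos one_pos (hτp_pos k)))
    linarith
  have hzdecomp : ∀ k, z k - (1+β) • xs = A k • F (x k) + (v k - xs) + β • (x k - xs) := by
    intro k
    simp only [hzdef]
    module
  set K : ℝ := 5 * R + β * XB with hKdef
  have hK0 : 0 ≤ K := by
    have : 0 ≤ β * XB := mul_nonneg hβ hXBnn
    simp only [hKdef]; linarith
  clear_value K
  have hw_step : ∀ k, ‖z (k+1) - (1+β) • xs‖ ≤ max (‖z k - (1+β) • xs‖) K + δ k := by
    intro k
    set ε : ℝ := A k - (1 - τ k) * (1 / τ k ^ p) with hεdef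
    have hε : 0 ≤ ε := by rw [hεdef]; exact hε0 k
    have hεA' : ε ≤ A k := by rw [hεdef]; exact hεA k
    clear_value ε
    have hy : z (k+1) - (1+β) • xs = (z k - (1+β) • xs - ε • F (x k)) - g k := by
      rw [hz_step k, ← hεdef]; abel
    have hw1 : ‖z (k+1) - (1+β) • xs‖ ≤ ‖z k - (1+β) • xs - ε • F (x k)‖ + δ k := by
      rw [hy]
      exact le_trans (norm_sub_le _ _) (by linarith [hg k])
    have hy2 : ‖z k - (1+β) • xs - ε • F (x k)‖^2
        = ‖z k - (1+β) • xs‖^2 - 2 * (ε * ⟪F (x k), z k - (1+β) • xs⟫_ℝ) + ε^2 * ‖F (x k)‖^2 := by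
      rw [norm_sub_sq_real, real_inner_smul_right, norm_smul, Real.norm_eq_abs,
        abs_of_nonneg hε, real_inner_comm]
      ring
    have hzin : ⟪F (x k), z k - (1+β) • xs⟫_ℝ
        = A k * ‖F (x k)‖^2 + ⟪F (x k), v k - xs⟫_ℝ + β * ⟪F (x k), x k - xs⟫_ℝ := by
      rw [hzdecomp k, inner_add_right, inner_add_right, real_inner_smul_right,
        real_inner_smul_right, real_inner_self_eq_norm_sq]
    have hlow : -(R * ‖F (x k)‖) ≤ ⟪F (x k), v k - xs⟫_ℝ := by
      have h1 := abs_real_inner_le_norm (F (x k)) (v k - xs)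
      have h2 : ‖F (x k)‖ * ‖v k - xs‖ ≤ ‖F (x k)‖ * R :=
        mul_le_mul_of_nonneg_left (hR k) (norm_nonneg _)
      have h3 := neg_abs_le ⟪F (x k), v k - xs⟫_ℝ
      nlinarith
    have hy3 : ‖z k - (1+β) • xs - ε • F (x k)‖^2
        ≤ ‖z k - (1+β) • xs‖^2 - ε * A k * ‖F (x k)‖^2 + 2 * ε * R * ‖F (x k)‖ := by
      have h1 : 0 ≤ (A k - ε) * ε * ‖F (x k)‖^2 :=
        mul_nonneg (mul_nonneg (by linarith) hε) (sq_nonneg _)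
      have h2 : 0 ≤ ε * (⟪F (x k), v k - xs⟫_ℝ + R * ‖F (x k)‖) :=
        mul_nonneg hε (by linarith)
      have h3 : 0 ≤ (β * ε) * ⟪F (x k), x k - xs⟫_ℝ :=
        mul_nonneg (mul_nonneg hβ hε) (hssnn k)
      rw [hy2, hzin]
      nlinarith
    by_cases hc : A k * ‖F (x k)‖ ≤ 2 * R
    · have hwk : ‖z k - (1+β) • xs‖ ≤ 3 * R + β * XB := by
        calc ‖z k - (1+β) • xs‖ = ‖A k • F (x k) + (v k - xs) + β • (x k - xs)‖ := by
              rw [hzdecomp k]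
          _ ≤ ‖A k • F (x k) + (v k - xs)‖ + ‖β • (x k - xs)‖ := norm_add_le _ _
          _ ≤ ‖A k • F (x k)‖ + ‖v k - xs‖ + ‖β • (x k - xs)‖ := by
              linarith [norm_add_le (A k • F (x k)) (v k - xs)]
          _ = A k * ‖F (x k)‖ + ‖v k - xs‖ + β * ‖x k - xs‖ := by
              rw [norm_smul, norm_smul, Real.norm_eq_abs, Real.norm_eq_abs,
                abs_of_nonneg (hAnonneg k), abs_of_nonneg hβ]
          _ ≤ 2 * R + R + β * XB := by
              have := mul_le_mul_of_nonneg_left (hXB k) hβ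
              linarith [hR k]
          _ = 3 * R + β * XB := by ring
      have hεh : ε * ‖F (x k)‖ ≤ 2 * R := by
        calc ε * ‖F (x k)‖ ≤ A k * ‖F (x k)‖ :=
              mul_le_mul_of_nonneg_right hεA' (norm_nonneg _)
          _ ≤ 2 * R := hc
      have hy4 : ‖z k - (1+β) • xs - ε • F (x k)‖^2 ≤ (3 * R + β * XB)^2 + 4 * R^2 := by
        have h5 : 0 ≤ ε * A k * ‖F (x k)‖^2 :=
          mul_nonneg (mul_nonneg hε (hAnonneg k)) (sq_nonneg _)
        have h8 : 2 * ε * R * ‖F (x k)‖ ≤ 4 * R^2 := by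
          calc 2 * ε * R * ‖F (x k)‖ = 2 * R * (ε * ‖F (x k)‖) := by ring
            _ ≤ 2 * R * (2 * R) := by
                exact mul_le_mul_of_nonneg_left hεh (by linarith)
            _ = 4 * R^2 := by ring
        have h9 : ‖z k - (1+β) • xs‖^2 ≤ (3 * R + β * XB)^2 :=
          pow_le_pow_left₀ (norm_nonneg _) hwk 2
        linarith
      have hy5 : ‖z k - (1+β) • xs - ε • F (x k)‖ ≤ K := by
        have hKsq : (3 * R + β * XB)^2 + 4 * R^2 ≤ K^2 := by
          rw [hKdef]
          have h10 : 0 ≤ β * XB := mul_nonneg hβ hXBnn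
          nlinarith [mul_nonneg hRnn h10, sq_nonneg R]
        exact sq_le_imp_le (by linarith) (norm_nonneg _) hK0
      calc ‖z (k+1) - (1+β) • xs‖ ≤ ‖z k - (1+β) • xs - ε • F (x k)‖ + δ k := hw1
        _ ≤ K + δ k := by linarith
        _ ≤ max (‖z k - (1+β) • xs‖) K + δ k := by
            linarith [le_max_right (‖z k - (1+β) • xs‖) K]
    · push_neg at hc
      have h6 : 2 * ε * R * ‖F (x k)‖ ≤ ε * A k * ‖F (x k)‖^2 := by
        calc 2 * ε * R * ‖F (x k)‖ = (ε * ‖F (x k)‖) * (2 * R) := by ring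
          _ ≤ (ε * ‖F (x k)‖) * (A k * ‖F (x k)‖) := by
              exact mul_le_mul_of_nonneg_left hc.le (mul_nonneg hε (norm_nonneg _))
          _ = ε * A k * ‖F (x k)‖^2 := by ring
      have hy4 : ‖z k - (1+β) • xs - ε • F (x k)‖^2 ≤ ‖z k - (1+β) • xs‖^2 := by
        linarith
      have hy5 : ‖z k - (1+β) • xs - ε • F (x k)‖ ≤ ‖z k - (1+β) • xs‖ :=
        sq_le_imp_le hy4 (norm_nonneg _) (norm_nonneg _)
      calc ‖z (k+1) - (1+β) • xs‖ ≤ ‖z k - (1+β) • xs - ε • F (x k)‖ + δ k := hw1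
        _ ≤ ‖z k - (1+β) • xs‖ + δ k := by linarith
        _ ≤ max (‖z k - (1+β) • xs‖) K + δ k := by
            linarith [le_max_left (‖z k - (1+β) • xs‖) K]
  -- uniform bound on w
  have hwB : ∀ k, ‖z k - (1+β) • xs‖
      ≤ max (‖z 0 - (1+β) • xs‖) K + ∑ j ∈ Finset.range k, δ j := by
    intro k
    induction k with
    | zero => simp [le_max_left]
    | succ n ih =>
      have h1 := hw_step n
      have h2 : max (‖z n - (1+β) • xs‖) K ≤ max (‖z 0 - (1+β) • xs‖) K
          + ∑ j ∈ Finset.range n, δ j := by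
        have hs : 0 ≤ ∑ j ∈ Finset.range n, δ j :=
          Finset.sum_nonneg (fun i _ => hδ0 i)
        rcases max_cases (‖z n - (1+β) • xs‖) K with ⟨h, _⟩ | ⟨h, _⟩
        · rw [h]; linarith
        · rw [h]; linarith [le_max_right (‖z 0 - (1+β) • xs‖) K]
      rw [Finset.sum_range_succ]
      linarith
  set W : ℝ := max (‖z 0 - (1+β) • xs‖) K + S with hWdef
  clear_value W
  have hwW : ∀ k, ‖z k - (1+β) • xs‖ ≤ W := by
    intro k
    have := hwB k
    have := hpart k
    simp only [hWdef]
    linarith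
  have hWnn : 0 ≤ W := by
    have : 0 ≤ max (‖z 0 - (1+β) • xs‖) K :=
      le_trans (norm_nonneg _) (le_max_left _ _)
    simp only [hWdef]; linarith
  -- final bound on ‖F (x (k+1))‖
  set C₁ : ℝ := W + R + β * XB with hC₁def
  have hC₁nn : 0 ≤ C₁ := by
    have : 0 ≤ β * XB := mul_nonneg hβ hXBnn
    simp only [hC₁def]; linarith
  clear_value C₁
  have hC1 : ∀ k, (1 / τ k ^ p) * ‖F (x (k+1))‖ ≤ C₁ := by
    intro k
    have hdec : A (k+1) • F (x (k+1))
        = (z (k+1) - (1+β) • xs) - (v (k+1) - xs) - β • (x (k+1) - xs) := by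
      simp only [hzdef]
      module
    have h1 : A (k+1) * ‖F (x (k+1))‖ ≤ W + R + β * XB := by
      calc A (k+1) * ‖F (x (k+1))‖ = ‖A (k+1) • F (x (k+1))‖ := by
            rw [norm_smul, Real.norm_eq_abs, abs_of_nonneg (hAnonneg (k+1))]
        _ = ‖(z (k+1) - (1+β) • xs) - (v (k+1) - xs) - β • (x (k+1) - xs)‖ := by rw [hdec]
        _ ≤ ‖(z (k+1) - (1+β) • xs) - (v (k+1) - xs)‖ + ‖β • (x (k+1) - xs)‖ :=
            norm_sub_le _ _
        _ ≤ ‖z (k+1) - (1+β) • xs‖ + ‖v (k+1) - xs‖ + ‖β • (x (k+1) - xs)‖ := by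
            linarith [norm_sub_le (z (k+1) - (1+β) • xs) (v (k+1) - xs)]
        _ ≤ W + R + β * XB := by
            rw [norm_smul, Real.norm_eq_abs, abs_of_nonneg hβ]
            have h3 := mul_le_mul_of_nonneg_left (hXB (k+1)) hβ
            linarith [hwW (k+1), hR (k+1)]
    rw [← hAs k]
    simp only [hC₁def]
    exact h1
  have hFbound : ∀ k, ‖F (x (k+1))‖ ≤ C₁ * τ k ^ p := by
    intro k
    have h := hC1 k
    have ht := hτp_pos k
    calc ‖F (x (k+1))‖ = ((1 / τ k ^ p) * ‖F (x (k+1))‖) * τ k ^ p := by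
          field_simp
      _ ≤ C₁ * τ k ^ p := mul_le_mul_of_nonneg_right h ht.le
  -- Gap bound
  set CG : ℝ := XB + ‖xs - x₀'‖ + D with hCGdef
  have hCGnn : 0 ≤ CG := by
    have := norm_nonneg (xs - x₀')
    simp only [hCGdef]; linarith
  clear_value CG
  have hGapB : ∀ k, Gap (x (k+1)) ≤ CG * ‖F (x (k+1))‖ := by
    intro k
    rw [hGap]
    have : Nonempty (Metric.closedBall x₀' D) := ⟨⟨x₀', Metric.mem_closedBall_self hD.le⟩⟩
    apply ciSup_le
    intro y
    have hmono : ⟪x (k+1) - (y : H), F (y : H)⟫_ℝ ≤ ⟪x (k+1) - (y : H), F (x (k+1))⟫_ℝ := by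
      have h1 := hF (x (k+1)) (y : H)
      have h2 : 0 ≤ ⟪F (x (k+1)) - F (y : H), x (k+1) - (y : H)⟫_ℝ :=
        le_trans (mul_nonneg hlam.le (sq_nonneg _)) h1
      rw [inner_sub_left] at h2
      linarith [h2, real_inner_comm (x (k+1) - (y : H)) (F (y : H)),
        real_inner_comm (x (k+1) - (y : H)) (F (x (k+1)))]
    have hdist : ‖x (k+1) - (y : H)‖ ≤ CG := by
      have hy : dist (y : H) x₀' ≤ D := Metric.mem_closedBall.mp y.2
      have hsplit : x (k+1) - (y : H) = (x (k+1) - xs) + ((xs - x₀') + (x₀' - (y : H))) := by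
        abel
      calc ‖x (k+1) - (y : H)‖
          ≤ ‖x (k+1) - xs‖ + ‖(xs - x₀') + (x₀' - (y : H))‖ := by
            rw [hsplit]; exact norm_add_le _ _
        _ ≤ ‖x (k+1) - xs‖ + (‖xs - x₀'‖ + ‖x₀' - (y : H)‖) := by
            linarith [norm_add_le (xs - x₀') (x₀' - (y : H))]
        _ ≤ XB + (‖xs - x₀'‖ + D) := by
            have h4 : ‖x₀' - (y : H)‖ ≤ D := by
              rw [← dist_eq_norm, dist_comm]
              exact hy
            linarith [hXB (k+1)]
        _ = CG := by simp only [hCGdef]; ring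
    calc ⟪x (k+1) - (y : H), F (y : H)⟫_ℝ ≤ ⟪x (k+1) - (y : H), F (x (k+1))⟫_ℝ := hmono
      _ ≤ ‖x (k+1) - (y : H)‖ * ‖F (x (k+1))‖ := real_inner_le_norm _ _
      _ ≤ CG * ‖F (x (k+1))‖ :=
          mul_le_mul_of_nonneg_right hdist (norm_nonneg _)
  -- conclusion
  refine ⟨max C₁ (CG * C₁) + 1, ?_, ?_⟩
  · have : C₁ ≤ max C₁ (CG * C₁) := le_max_left _ _
    linarith
  intro k
  have htp := hτp_pos k
  constructor
  · calc ‖F (x (k+1))‖ ≤ C₁ * τ k ^ p := hFbound k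
      _ ≤ (max C₁ (CG * C₁) + 1) * τ k ^ p := by
          apply mul_le_mul_of_nonneg_right _ htp.le
          linarith [le_max_left C₁ (CG * C₁)]
  · calc Gap (x (k+1)) ≤ CG * ‖F (x (k+1))‖ := hGapB k
      _ ≤ CG * (C₁ * τ k ^ p) :=
          mul_le_mul_of_nonneg_left (hFbound k) hCGnn
      _ = (CG * C₁) * τ k ^ p := by ring
      _ ≤ (max C₁ (CG * C₁) + 1) * τ k ^ p := by
          apply mul_le_mul_of_nonneg_right _ htp.le
          linarith [le_max_right C₁ (CG * C₁)]
end

section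
/- Let (x_k) be generated by the inexact Linear Contracting PPA recursion for the λ-cocoercive operator F, and suppose F(x_*) = 0. Then there exists a constant C > 0 such that for all k ≥ 0: ‖F(x_{k+1})‖ ≤ C (1−ητ)^{k+1} and Gap(x_{k+1}) ≤ C (1−ητ)^{k+1}. -/
set_option maxHeartbeats 1000000


open Filter Topology
open scoped InnerProductSpace

open Filter Topology
open scoped InnerProductSpace

private lemma sqh1 (a b E : ℝ) (ha : 0 ≤ a) (hb : 0 ≤ b) (hE : 0 ≤ E) (h : a^2 + E ≤ b^2) :
    a ≤ b := by nlinarith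

private lemma sqh2 (a b d X E : ℝ) (ha : 0 ≤ a) (hb : 0 ≤ b) (hd : 0 ≤ d) (hE : 0 ≤ E)
    (hX : 0 ≤ X) (h1 : X ≤ a + d) (h2 : a^2 + E ≤ b^2) : X^2 + E ≤ (b+d)^2 := by
  nlinarith [mul_le_mul_of_nonneg_right (sqh1 a b E ha hb hE h2) hd]

private lemma sqh3 (a T : ℝ) (ha : 0 ≤ a) (h : a ≤ T) : a^2 ≤ T^2 := by nlinarith

private lemma sqh4 (p B : ℝ) (h0 : 0 < p) (h1 : p^2 ≤ p*B) : p ≤ B := by nlinarith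

private lemma mulh1 (U R : ℝ) (hU : 0 ≤ U) (hR : 0 ≤ R) : U ≤ (U+1)*(R+1) := by nlinarith

private lemma mulh2 (U R : ℝ) (hU : 0 ≤ U) (hR : 0 ≤ R) : R*U ≤ (U+1)*(R+1) := by nlinarith


private lemma onestep {H : Type*} [NormedAddCommGroup H] [InnerProductSpace ℝ H]
    (A s σ : ℝ) (hs : 0 < s) (hσ0 : 0 ≤ σ) (hA0 : 0 ≤ A) (hσA : σ ≤ 1 - A)
    (y z u : H) (hu : 0 ≤ ⟪u, A•y + s•z - s•u⟫_ℝ) :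
    ‖s•(z - σ•u) - σ•(A•y + s•z - s•u)‖^2 + σ*(1-A-σ)*‖A•y + s•z - s•u‖^2 ≤
      ‖s•z - σ•y‖^2 + σ*(1-A-σ)*‖y‖^2 := by
  have key : (‖s•z - σ•y‖^2 + σ*(1-A-σ)*‖y‖^2) -
      (‖s•(z - σ•u) - σ•(A•y + s•z - s•u)‖^2 + σ*(1-A-σ)*‖A•y + s•z - s•u‖^2) =
      2*σ*s*(1-A-σ)*⟪u, A•y + s•z - s•u⟫_ℝ + σ*(1+A)*‖(1-A)•y - s•z‖^2
        + s^2*σ*(1-A-σ)*‖u‖^2 := by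
    simp only [← real_inner_self_eq_norm_sq]
    simp only [inner_sub_left, inner_sub_right, inner_add_left, inner_add_right,
      real_inner_smul_left, real_inner_smul_right]
    rw [real_inner_comm z y, real_inner_comm u y, real_inner_comm u z]
    ring
  nlinarith [norm_nonneg ((1-A)•y - s•z), norm_nonneg u, sq_nonneg (‖(1-A)•y - s•z‖),
    sq_nonneg ‖u‖, mul_nonneg hσ0 (by linarith : (0:ℝ) ≤ 1+A),
    mul_nonneg (mul_nonneg hσ0 hs.le) (by linarith : (0:ℝ) ≤ 1-A-σ),
    mul_nonneg (mul_nonneg (sq_nonneg s) hσ0) (by linarith : (0:ℝ) ≤ 1-A-σ)]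

/-- Linear convergence rates of the inexact Linear Contracting PPA
applied to a λ-cocoercive operator `F` with `F x_* = 0`: there is `C > 0` with
`‖F(x_{k+1})‖ ≤ C(1−ητ)^{k+1}` and `Gap(x_{k+1}) ≤ C(1−ητ)^{k+1}`. -/
theorem linear_contracting_ppa_rates
    {H : Type*} [NormedAddCommGroup H] [InnerProductSpace ℝ H] [CompleteSpace H]
    (lam : ℝ) (hlam : 0 < lam) (F : H → H)
    (hF : ∀ x y : H, lam * ‖F x - F y‖ ^ 2 ≤ ⟪F x - F y, x - y⟫_ℝ)
    (x₀' : H) (D : ℝ) (hD : 0 < D)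
    (Gap : H → ℝ)
    (hGap : ∀ z : H, Gap z = ⨆ y : Metric.closedBall x₀' D, ⟪z - (y : H), F (y : H)⟫_ℝ)
    (τ η β : ℝ) (hτ0 : 0 < τ) (hτ1 : τ < 1) (hη0 : 0 < η) (hη1 : η ≤ 1) (hβ : 0 ≤ β)
    (x : ℕ → H)
    (v : ℕ → H)
    (hv0 : v 0 = (1 / τ) • x 0 - ((1 - τ) / τ) • x 0)
    (hv : ∀ k, v (k + 1) = (1 / τ) • x (k + 1) - ((1 - τ) / τ) • x k)
    (δ : ℕ → ℝ) (hδ0 : ∀ k, 0 ≤ δ k) (hδ : Summable δ)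
    (g : ℕ → H) (hg : ∀ k, ‖g k‖ ≤ δ k)
    (hx : ∀ k, (0 : H) = (1 / (1 - η * τ) ^ (k + 1)) • F (x (k + 1)) -
      ((1 - τ) / (1 - η * τ) ^ (k + 1)) • F (x k) + (v (k + 1) - v k) +
      β • (x (k + 1) - x k) + g k)
    (xs : H) (hxs : F xs = 0) :
    ∃ C : ℝ, 0 < C ∧ ∀ k,
      ‖F (x (k + 1))‖ ≤ C * (1 - η * τ) ^ (k + 1) ∧
      Gap (x (k + 1)) ≤ C * (1 - η * τ) ^ (k + 1) := by
  set q := 1 - η * τ with hqdef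
  have hq0 : (0:ℝ) < q := by rw [hqdef]; nlinarith
  have hbt : (0:ℝ) < 1 + β * τ := by nlinarith
  set s := τ / (1 + β * τ) with hsdef
  have hs : 0 < s := div_pos hτ0 hbt
  set A := (1 - τ) / (1 + β * τ) with hAdef
  have hA0 : 0 < A := div_pos (by linarith) hbt
  have hA1 : A < 1 := by rw [hAdef, div_lt_one hbt]; nlinarith
  set σ := τ * (1 - η) / q with hσdef
  have hσ0 : 0 ≤ σ := by
    apply div_nonneg _ hq0.le; nlinarith
  have hσA : σ < 1 - A := by
    have h1A : 1 - A = τ * (1 + β) / (1 + β * τ) := by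
      rw [hAdef]; field_simp; ring
    rw [hσdef, h1A, div_lt_div_iff₀ hq0 hbt]
    rw [hqdef]
    nlinarith [mul_pos hτ0 (mul_pos (show (0:ℝ) < β + η by linarith) (show (0:ℝ) < 1 - τ by linarith))]
  set u : ℕ → H := fun k => (1 / q ^ k) • F (x k) with hudef
  set y : ℕ → H := fun k => x k - xs with hydef
  set z : ℕ → H := fun k => u k + v k + β • x k - (1 + β) • xs with hzdef
  have hz : ∀ k, z (k + 1) = z k - σ • u k - g k := by
    intro k
    have h := hx k
    have e1 : ((1 - τ) / q ^ (k + 1)) • F (x k) = (1 - σ) • u k := by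
      simp only [hudef, smul_smul]
      congr 1
      rw [hσdef]
      field_simp
      ring
    have e2 : (1 / q ^ (k + 1)) • F (x (k + 1)) = u (k + 1) := rfl
    rw [e1, e2] at h
    simp only [hzdef]
    linear_combination (norm := module) -h
  have hy' : ∀ k, y (k + 1) = A • y k + s • z (k + 1) - s • u (k + 1) := by
    intro k
    simp only [hydef, hzdef, hv k]
    have hbt' : (1:ℝ) + τ * β ≠ 0 := by nlinarith
    have hbt2 : (1:ℝ) + β * τ ≠ 0 := by nlinarith
    have hτ' : τ ≠ 0 := hτ0.ne'
    match_scalars <;> (field_simp [hsdef, hAdef, hbt2, hτ0.ne']; try ring) <;> (simp only [hsdef, hAdef]; field_simp; try ring)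
  have huy : ∀ k, 0 ≤ ⟪u k, y k⟫_ℝ := by
    intro k
    have h := hF (x k) xs
    rw [hxs, sub_zero] at h
    have h2 : 0 ≤ ⟪F (x k), x k - xs⟫_ℝ :=
      le_trans (by positivity) h
    simp only [hudef, hydef]
    rw [real_inner_smul_left]
    exact mul_nonneg (by positivity) h2
  have hAσ' : (0:ℝ) ≤ 1 - A - σ := by linarith
  set VV : ℕ → ℝ := fun k => ‖s • z (k+1) - σ • y k‖^2 + σ*(1-A-σ)*‖y k‖^2 with hVVdef
  have hVV0 : ∀ k, 0 ≤ VV k := by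
    intro k; simp only [hVVdef]
    have := mul_nonneg (mul_nonneg hσ0 hAσ') (sq_nonneg ‖y k‖)
    nlinarith [sq_nonneg ‖s • z (k+1) - σ • y k‖]
  have hstep : ∀ k, VV (k+1) ≤ (Real.sqrt (VV k) + s * δ (k+1))^2 := by
    intro k
    have hyy := hy' k
    have h0 : 0 ≤ ⟪u (k+1), A • y k + s • z (k+1) - s • u (k+1)⟫_ℝ := by
      rw [← hyy]; exact huy (k+1)
    have hcert := onestep A s σ hs hσ0 hA0.le (by linarith) (y k) (z (k+1)) (u (k+1)) h0
    rw [← hyy] at hcert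
    have hz2 : s • z (k+1+1) - σ • y (k+1)
        = (s • (z (k+1) - σ • u (k+1)) - σ • y (k+1)) - s • g (k+1) := by
      rw [hz (k+1)]; module
    have hnorm : ‖s • z (k+1+1) - σ • y (k+1)‖
        ≤ ‖s • (z (k+1) - σ • u (k+1)) - σ • y (k+1)‖ + s * δ (k+1) := by
      rw [hz2]
      refine le_trans (norm_sub_le _ _) ?_
      have e : ‖s • g (k+1)‖ = s * ‖g (k+1)‖ := by
        rw [norm_smul, Real.norm_eq_abs, abs_of_pos hs]
      have := mul_le_mul_of_nonneg_left (hg (k+1)) hs.le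
      nlinarith [e]
    have hb2 : (Real.sqrt (VV k))^2 = VV k := Real.sq_sqrt (hVV0 k)
    have hb0 : 0 ≤ Real.sqrt (VV k) := Real.sqrt_nonneg _
    have ha0 : 0 ≤ ‖s • (z (k+1) - σ • u (k+1)) - σ • y (k+1)‖ := norm_nonneg _
    have hd0 : 0 ≤ s * δ (k+1) := mul_nonneg hs.le (hδ0 _)
    have hE1 : 0 ≤ σ*(1-A-σ)*‖y (k+1)‖^2 :=
      mul_nonneg (mul_nonneg hσ0 hAσ') (sq_nonneg _)
    have hcert2 : ‖s • (z (k+1) - σ • u (k+1)) - σ • y (k+1)‖^2 + σ*(1-A-σ)*‖y (k+1)‖^2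
        ≤ (Real.sqrt (VV k))^2 := by rw [hb2]; exact hcert
    simp only [hVVdef]
    exact sqh2 _ _ _ _ _ ha0 hb0 hd0 hE1 (norm_nonneg _) hnorm hcert2
  have hsq : ∀ k, Real.sqrt (VV k) ≤ Real.sqrt (VV 0) + s * ∑ j ∈ Finset.range k, δ (j+1) := by
    intro k; induction k with
    | zero => simp
    | succ n ih =>
      have h1 : Real.sqrt (VV (n+1)) ≤ Real.sqrt (VV n) + s * δ (n+1) := by
        have h2 := Real.sqrt_le_sqrt (hstep n)
        rwa [Real.sqrt_sq (add_nonneg (Real.sqrt_nonneg _) (mul_nonneg hs.le (hδ0 _)))] at h2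
      rw [Finset.sum_range_succ]
      have h3 : s * (∑ j ∈ Finset.range n, δ (j+1) + δ (n+1))
          = s * ∑ j ∈ Finset.range n, δ (j+1) + s * δ (n+1) := by ring
      rw [h3]
      linarith
  set S := ∑' k, δ k with hSdef
  have hS0 : 0 ≤ S := tsum_nonneg hδ0
  have hpart : ∀ k, ∑ j ∈ Finset.range k, δ (j+1) ≤ S := by
    intro k
    calc ∑ j ∈ Finset.range k, δ (j+1) ≤ ∑ j ∈ Finset.range (k+1), δ j := by
          rw [Finset.sum_range_succ']; have := hδ0 0; linarith
      _ ≤ S := Summable.sum_le_tsum _ (fun i _ => hδ0 i) hδ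
  set VB := (Real.sqrt (VV 0) + s * S)^2 with hVBdef
  have hVB : ∀ k, VV k ≤ VB := by
    intro k
    have h1 : Real.sqrt (VV k) ≤ Real.sqrt (VV 0) + s * S := by
      have h2 := hsq k
      have h3 := hpart k
      nlinarith [hs.le]
    rw [hVBdef, ← Real.sq_sqrt (hVV0 k)]
    exact sqh3 _ _ (Real.sqrt_nonneg _) h1
  have hσA2 : (0:ℝ) < 1 - A - σ := by linarith
  have hzsq : ∀ k, (1-A-σ) * s^2 * ‖z (k+1)‖^2 ≤ (1-A) * VB := by
    intro k
    have hid : (1-A) * VV k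
        = (1-A-σ) * s^2 * ‖z (k+1)‖^2 + σ * ‖s • z (k+1) - (1-A) • y k‖^2 := by
      simp only [hVVdef]
      simp only [← real_inner_self_eq_norm_sq]
      simp only [inner_sub_left, inner_sub_right, real_inner_smul_left, real_inner_smul_right]
      rw [real_inner_comm (z (k+1)) (y k)]
      ring
    have hm := mul_le_mul_of_nonneg_left (hVB k) (by linarith : (0:ℝ) ≤ 1 - A)
    have hnn := mul_nonneg hσ0 (sq_nonneg ‖s • z (k+1) - (1-A) • y k‖)
    linarith [hid]
  set Z := Real.sqrt ((1-A) * VB / ((1-A-σ) * s^2)) with hZdef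
  have hZ0 : 0 ≤ Z := Real.sqrt_nonneg _
  have hzb : ∀ k, ‖z (k+1)‖ ≤ Z := by
    intro k
    rw [hZdef, show ‖z (k+1)‖ = Real.sqrt (‖z (k+1)‖^2) from (Real.sqrt_sq (norm_nonneg _)).symm]
    apply Real.sqrt_le_sqrt
    rw [le_div_iff₀ (by positivity)]
    linarith [hzsq k]
  have hystep : ∀ k, ‖y (k+1)‖ ≤ A * ‖y k‖ + s * ‖z (k+1)‖ := by
    intro k
    have e0 := hy' k
    have e : ⟪y (k+1), y (k+1)⟫_ℝ
        = ⟪y (k+1), A • y k + s • z (k+1)⟫_ℝ - s * ⟪u (k+1), y (k+1)⟫_ℝ := by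
      rw [e0]
      simp only [inner_sub_left, inner_sub_right, inner_add_left, inner_add_right,
        real_inner_smul_left, real_inner_smul_right]
      try rw [real_inner_comm (z (k+1)) (y k)]
      try rw [real_inner_comm (u (k+1)) (y k)]
      try rw [real_inner_comm (u (k+1)) (z (k+1))]
      ring
    have h1 : ‖y (k+1)‖^2 ≤ ‖y (k+1)‖ * (A * ‖y k‖ + s * ‖z (k+1)‖) := by
      have h2 : ⟪y (k+1), A • y k + s • z (k+1)⟫_ℝ ≤ ‖y (k+1)‖ * ‖A • y k + s • z (k+1)‖ :=
        real_inner_le_norm _ _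
      have h3 : ‖A • y k + s • z (k+1)‖ ≤ A * ‖y k‖ + s * ‖z (k+1)‖ := by
        refine le_trans (norm_add_le _ _) ?_
        rw [norm_smul, norm_smul, Real.norm_eq_abs, Real.norm_eq_abs,
          abs_of_pos hA0, abs_of_pos hs]
      have h4 : 0 ≤ s * ⟪u (k+1), y (k+1)⟫_ℝ := mul_nonneg hs.le (huy (k+1))
      have h5 : ‖y (k+1)‖^2 = ⟪y (k+1), y (k+1)⟫_ℝ := (real_inner_self_eq_norm_sq _).symm
      have h6 : ‖y (k+1)‖ * ‖A • y k + s • z (k+1)‖ ≤ ‖y (k+1)‖ * (A * ‖y k‖ + s * ‖z (k+1)‖) :=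
        mul_le_mul_of_nonneg_left h3 (norm_nonneg _)
      linarith [h2, h4, h6, e, h5]
    rcases eq_or_lt_of_le (norm_nonneg (y (k+1))) with h0 | h0
    · rw [← h0]
      have := mul_nonneg hA0.le (norm_nonneg (y k))
      have := mul_nonneg hs.le (norm_nonneg (z (k+1)))
      linarith
    · exact sqh4 _ _ h0 h1
  set Y := max ‖y 0‖ (s * Z / (1 - A)) with hYdef
  have hY0 : 0 ≤ Y := le_trans (norm_nonneg _) (le_max_left _ _)
  have hyb : ∀ k, ‖y k‖ ≤ Y := by
    intro k; induction k with
    | zero => exact le_max_left _ _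
    | succ n ih =>
      have h2 : s * Z ≤ (1 - A) * Y := by
        have h3 : s * Z / (1 - A) ≤ Y := le_max_right _ _
        rw [div_le_iff₀ (by linarith : (0:ℝ) < 1 - A)] at h3
        linarith
      have h4 := hystep n
      have h5 : A * ‖y n‖ ≤ A * Y := mul_le_mul_of_nonneg_left ih hA0.le
      have h6 : s * ‖z (n+1)‖ ≤ s * Z := mul_le_mul_of_nonneg_left (hzb n) hs.le
      linarith [h4, h5, h6, h2]
  set U := (A * Y + s * Z + Y) / s with hUdef
  have hsum0 : (0:ℝ) ≤ A * Y + s * Z + Y := by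
    have := mul_nonneg hA0.le hY0
    have := mul_nonneg hs.le hZ0
    linarith
  have hU0 : 0 ≤ U := div_nonneg hsum0 hs.le
  have hub : ∀ k, ‖u (k+1)‖ ≤ U := by
    intro k
    have e : s • u (k+1) = A • y k + s • z (k+1) - y (k+1) := by
      rw [hy' k]; module
    have e2 : ‖s • u (k+1)‖ = s * ‖u (k+1)‖ := by
      rw [norm_smul, Real.norm_eq_abs, abs_of_pos hs]
    have h3 : ‖s • u (k+1)‖ ≤ A * Y + s * Z + Y := by
      rw [e]
      refine le_trans (norm_sub_le _ _) ?_
      have h4 : ‖A • y k + s • z (k+1)‖ ≤ A * Y + s * Z := by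
        refine le_trans (norm_add_le _ _) ?_
        rw [norm_smul, norm_smul, Real.norm_eq_abs, Real.norm_eq_abs,
          abs_of_pos hA0, abs_of_pos hs]
        have := mul_le_mul_of_nonneg_left (hyb k) hA0.le
        have := mul_le_mul_of_nonneg_left (hzb k) hs.le
        linarith
      have h5 := hyb (k+1)
      linarith
    rw [hUdef, le_div_iff₀ hs]
    linarith [h3, e2]
  have hqpow : ∀ m:ℕ, (0:ℝ) < q^m := fun m => pow_pos hq0 m
  have hFb : ∀ k, ‖F (x (k+1))‖ ≤ U * q^(k+1) := by
    intro k
    have e : ‖u (k+1)‖ = (1/q^(k+1)) * ‖F (x (k+1))‖ := by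
      simp only [hudef]
      rw [norm_smul, Real.norm_eq_abs, abs_of_pos (by positivity)]
    have h1 := hub k
    rw [e] at h1
    have hp := hqpow (k+1)
    calc ‖F (x (k+1))‖ = q^(k+1) * ((1/q^(k+1)) * ‖F (x (k+1))‖) := by
          field_simp
      _ ≤ q^(k+1) * U := mul_le_mul_of_nonneg_left h1 hp.le
      _ = U * q^(k+1) := mul_comm _ _
  set R := Y + ‖xs - x₀'‖ + D with hRdef
  have hR0 : 0 ≤ R := by
    have := norm_nonneg (xs - x₀')
    rw [hRdef]; linarith [hD.le, hY0]
  refine ⟨(U+1)*(R+1), by positivity, ?_⟩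
  intro k
  have hq0' : (0:ℝ) ≤ q^(k+1) := (hqpow (k+1)).le
  constructor
  · calc ‖F (x (k+1))‖ ≤ U * q^(k+1) := hFb k
      _ ≤ (U+1)*(R+1) * q^(k+1) := mul_le_mul_of_nonneg_right (mulh1 U R hU0 hR0) hq0'
  · rw [hGap]
    apply Real.iSup_le
    · rintro ⟨w, hw⟩
      have hw2 : dist w x₀' ≤ D := Metric.mem_closedBall.mp hw
      have hw3 : ‖x₀' - w‖ ≤ D := by
        rw [← dist_eq_norm, dist_comm]; exact hw2
      have h1 : ‖x (k+1) - xs‖ ≤ Y := by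
        have := hyb (k+1); simpa only [hydef] using this
      have hw' : ‖x (k+1) - w‖ ≤ R := by
        have e : x (k+1) - w = (x (k+1) - xs) + (xs - x₀') + (x₀' - w) := by abel
        rw [e]
        refine le_trans (norm_add₃_le) ?_
        rw [hRdef]
        have := norm_nonneg (xs - x₀')
        linarith
      have hmono : ⟪x (k+1) - w, F w⟫_ℝ ≤ ⟪x (k+1) - w, F (x (k+1))⟫_ℝ := by
        have h := hF (x (k+1)) w
        have h2 : 0 ≤ ⟪F (x (k+1)) - F w, x (k+1) - w⟫_ℝ :=
          le_trans (by positivity) h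
        rw [inner_sub_left] at h2
        rw [real_inner_comm (x (k+1) - w) (F (x (k+1))), real_inner_comm (x (k+1) - w) (F w)] at h2
        linarith
      calc ⟪x (k+1) - w, F w⟫_ℝ ≤ ⟪x (k+1) - w, F (x (k+1))⟫_ℝ := hmono
        _ ≤ ‖x (k+1) - w‖ * ‖F (x (k+1))‖ := real_inner_le_norm _ _
        _ ≤ R * (U * q^(k+1)) := mul_le_mul hw' (hFb k) (norm_nonneg _) hR0
        _ = (R*U) * q^(k+1) := by ring
        _ ≤ (U+1)*(R+1)*q^(k+1) := mul_le_mul_of_nonneg_right (mulh2 U R hU0 hR0) hq0'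
    · exact mul_nonneg (mul_nonneg (by linarith) (by linarith)) hq0'
end

section
/- Let (a_k), (b_k), (d_k) be real sequences with a_k ≥ 0 and d_k ≥ 0 for all k, let (t_k) be a sequence of positive reals and let η > 0. If a_{k+1} ≤ a_k + b_{k+1} for all k, (t_{k+1} + η) b_{k+1} ≤ t_k b_k + d_k for all k, and ∑_{k=0}^{∞} d_k < ∞, then the sequence (a_k) is convergent. -/
open Filter Topology Finset

/-- If `a_k, d_k ≥ 0`, `t_k > 0`, `η > 0`, `a_{k+1} ≤ a_k + b_{k+1}`,
`(t_{k+1} + η) * b_{k+1} ≤ t_k b_k + d_k`, and `∑ d_k < ∞`, then `(a_k)` converges. -/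
theorem convergent_of_quasi_monotone
    (a b d t : ℕ → ℝ) (η : ℝ) (hη : 0 < η)
    (ha : ∀ k, 0 ≤ a k) (hd : ∀ k, 0 ≤ d k) (ht : ∀ k, 0 < t k)
    (h1 : ∀ k, a (k + 1) ≤ a k + b (k + 1))
    (h2 : ∀ k, (t (k + 1) + η) * b (k + 1) ≤ t k * b k + d k)
    (h3 : Summable d) :
    ∃ L : ℝ, Tendsto a atTop (𝓝 L) := by
  set p : ℕ → ℝ := fun k => max (b k) 0 with hp
  set c : ℕ → ℝ := fun k => max (t k * b k) 0 with hc
  have hpnn : ∀ k, 0 ≤ p k := fun k => le_max_right _ _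
  have hcnn : ∀ k, 0 ≤ c k := fun k => le_max_right _ _
  have key : ∀ k, c (k + 1) + η * p (k + 1) ≤ c k + d k := by
    intro k
    rcases le_or_gt 0 (b (k + 1)) with hb | hb
    · have hpk : p (k + 1) = b (k + 1) := max_eq_left hb
      have hck : c (k + 1) = t (k + 1) * b (k + 1) :=
        max_eq_left (mul_nonneg (ht _).le hb)
      rw [hpk, hck]
      calc t (k + 1) * b (k + 1) + η * b (k + 1)
          = (t (k + 1) + η) * b (k + 1) := by ring
        _ ≤ t k * b k + d k := h2 k
        _ ≤ c k + d k := by gcongr; exact le_max_left _ _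
    · have hpk : p (k + 1) = 0 := max_eq_right hb.le
      have hck : c (k + 1) = 0 := max_eq_right (by nlinarith [ht (k+1)])
      rw [hpk, hck]
      simp only [mul_zero, add_zero, zero_add]
      exact add_nonneg (hcnn k) (hd k)
  -- partial sums
  have sums : ∀ n, c n + η * ∑ j ∈ range n, p (j + 1) ≤ c 0 + ∑ j ∈ range n, d j := by
    intro n
    induction n with
    | zero => simp
    | succ n ih =>
      rw [Finset.sum_range_succ, Finset.sum_range_succ, mul_add]
      have := key n
      linarith
  have hps : Summable (fun j => p (j + 1)) := by
    apply summable_of_sum_range_le (c := (c 0 + ∑' j, d j) / η) (fun n => hpnn _)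
    intro n
    rw [le_div_iff₀ hη]
    have h := sums n
    have hle : ∑ j ∈ range n, d j ≤ ∑' j, d j :=
      Summable.sum_le_tsum _ (fun i _ => hd i) h3
    nlinarith [hcnn n]
  set S : ℕ → ℝ := fun n => ∑ j ∈ range n, p (j + 1) with hS
  have hSb : ∀ n, S n ≤ ∑' j, p (j + 1) := fun n =>
    Summable.sum_le_tsum _ (fun i _ => hpnn _) hps
  have hSt : Tendsto S atTop (𝓝 (∑' j, p (j + 1))) := hps.hasSum.tendsto_sum_nat
  have hanti : Antitone (fun n => a n - S n) := by
    apply antitone_nat_of_succ_le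
    intro n
    have hb' : b (n + 1) ≤ p (n + 1) := le_max_left _ _
    have : S (n + 1) = S n + p (n + 1) := Finset.sum_range_succ _ _
    have := h1 n
    simp only [hS] at *
    rw [Finset.sum_range_succ]
    linarith
  have hbdd : BddBelow (Set.range fun n => a n - S n) := by
    refine ⟨-(∑' j, p (j + 1)), ?_⟩
    rintro x ⟨n, rfl⟩
    have := hSb n
    have := ha n
    simp only [neg_le]
    linarith
  have hconv := tendsto_atTop_ciInf hanti hbdd
  exact ⟨_, (hconv.add hSt).congr (fun n => by ring)⟩
end
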